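/- arXiv:2103.05195 — 2 statements merged into one kernel-verified Lean document; each statement's English description precedes it below -/
import Mathlib

section
/- Let D ⊆ [n]² and α ∈ ℤ_{≥0}^n with α₁ + ⋯ + α_n = #D. Then α ∈ S_D if and only if for every S ⊆ [n] there exists a flagged column-injective tableau τ of shape D with Σ_{i∈S} α_i ≤ #τ⁻¹(S). -/
namespace Schub

/-- The `n × n` grid `[n]²` (1-based). -/
def grid (n : ℕ) : Finset (ℕ × ℕ) := Finset.Icc 1 n ×ˢ Finset.Icc 1 n

/-- State of the bracket-matching stack in column `c` after reading rows `1,…,r`: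
the set of rows that contributed a so-far unmatched `'('`. -/
def openRows (D : Finset (ℕ × ℕ)) (S : Finset ℕ) (c : ℕ) : ℕ → Finset ℕ
  | 0 => ∅
  | r + 1 =>
    let st := openRows D S c r
    if (r + 1, c) ∉ D ∧ r + 1 ∈ S then insert (r + 1) st
    else if (r + 1, c) ∈ D ∧ r + 1 ∉ S then
      (if h : st.Nonempty then st.erase (st.max' h) else st)
    else st

/-- The label of box `(r,c)` in the tableau `π_{D,S}`. -/
def piLabel (D : Finset (ℕ × ℕ)) (S : Finset ℕ) (r c : ℕ) : Option ℕ :=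
  if (r, c) ∈ D then
    if r ∈ S then some r
    else if h : (openRows D S c (r - 1)).Nonempty then
      some ((openRows D S c (r - 1)).max' h)
    else none
  else none

/-- `θ_D^c(S)`: number of `⋆`'s plus matched `()` pairs in `word_{c,S}(D)`. -/
def thetaCol (n : ℕ) (D : Finset (ℕ × ℕ)) (S : Finset ℕ) (c : ℕ) : ℕ :=
  ((Finset.Icc 1 n).filter fun r => (r, c) ∈ D ∧ r ∈ S).card +
  ((Finset.Icc 1 n).filter fun r =>
      (r, c) ∈ D ∧ r ∉ S ∧ (openRows D S c (r - 1)).Nonempty).card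

/-- `θ_D(S) = Σ_c θ_D^c(S)`. -/
def theta (n : ℕ) (D : Finset (ℕ × ℕ)) (S : Finset ℕ) : ℕ :=
  ∑ c ∈ Finset.Icc 1 n, thetaCol n D S c

/-- `π_{D,S}⁻¹(S)`: boxes of `D` whose `π_{D,S}`-label lies in `S`. -/
def piInv (D : Finset (ℕ × ℕ)) (S : Finset ℕ) : Finset (ℕ × ℕ) :=
  D.filter fun b => ∃ s ∈ S, piLabel D S b.1 b.2 = some s

/-- `τ` is a tableau of shape `D` with labels in `[n] ∪ {∘}`. -/
def IsTab (n : ℕ) (D : Finset (ℕ × ℕ)) (τ : ℕ × ℕ → Option ℕ) : Prop :=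
  (∀ b, b ∉ D → τ b = none) ∧ ∀ b ∈ D, ∀ l, τ b = some l → l ∈ Finset.Icc 1 n

/-- Flagged: any label in row `r` is `≤ r`. -/
def Flagged (D : Finset (ℕ × ℕ)) (τ : ℕ × ℕ → Option ℕ) : Prop :=
  ∀ b ∈ D, ∀ l, τ b = some l → l ≤ b.1

/-- Column-injective: labels in each column are distinct. -/
def ColInj (D : Finset (ℕ × ℕ)) (τ : ℕ × ℕ → Option ℕ) : Prop :=
  ∀ b ∈ D, ∀ b' ∈ D, b.2 = b'.2 → b ≠ b' → ∀ l, τ b = some l → τ b' ≠ some l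

/-- `τ⁻¹(S)`: boxes of `D` whose label lies in `S`. -/
def labInv (D : Finset (ℕ × ℕ)) (τ : ℕ × ℕ → Option ℕ) (S : Finset ℕ) : Finset (ℕ × ℕ) :=
  D.filter fun b => ∃ s ∈ S, τ b = some s

/-- `τ` has content `α`. -/
def HasContent (n : ℕ) (D : Finset (ℕ × ℕ)) (τ : ℕ × ℕ → Option ℕ) (α : ℕ → ℕ) : Prop :=
  ∀ i ∈ Finset.Icc 1 n, (D.filter fun b => τ b = some i).card = α i

/-- Membership in `FCITab(D,α)`. -/
def IsFCI (n : ℕ) (D : Finset (ℕ × ℕ)) (τ : ℕ × ℕ → Option ℕ) (α : ℕ → ℕ) : Prop :=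
  IsTab n D τ ∧ Flagged D τ ∧ ColInj D τ ∧ HasContent n D τ α

/-- Membership in `PerfectTab(D,α)`: additionally no box is unlabelled. -/
def IsPerfect (n : ℕ) (D : Finset (ℕ × ℕ)) (τ : ℕ × ℕ → Option ℕ) (α : ℕ → ℕ) : Prop :=
  IsFCI n D τ α ∧ ∀ b ∈ D, τ b ≠ none

/-- The (lattice point) membership in the Schubitope `S_D`. -/
def InSchubitope (n : ℕ) (D : Finset (ℕ × ℕ)) (α : ℕ → ℕ) : Prop :=
  (∑ i ∈ Finset.Icc 1 n, α i) = D.card ∧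
  ∀ S ⊆ Finset.Icc 1 n, (∑ i ∈ S, α i) ≤ theta n D S

/-- Membership in the polytope `P(D,α)`. -/
def InP (n : ℕ) (D : Finset (ℕ × ℕ)) (α : ℕ → ℝ) (x : ℕ → ℕ → ℝ) : Prop :=
  (∀ i ∈ Finset.Icc 1 n, ∀ j ∈ Finset.Icc 1 n, 0 ≤ x i j ∧ x i j ≤ 1) ∧
  (∀ i ∈ Finset.Icc 1 n, (∑ j ∈ Finset.Icc 1 n, x i j) = α i) ∧
  (∀ j ∈ Finset.Icc 1 n, ∀ s ∈ Finset.Icc 1 n,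
    ((D.filter fun b => b.2 = j ∧ b.1 ≤ s).card : ℝ) ≤ ∑ i ∈ Finset.Icc 1 s, x i j)

section Aux

open Finset

variable {D : Finset (ℕ × ℕ)} {S : Finset ℕ} {c n : ℕ}

lemma openRows_zero : openRows D S c 0 = ∅ := rfl

lemma openRows_succ (r : ℕ) : openRows D S c (r + 1) =
    if (r + 1, c) ∉ D ∧ r + 1 ∈ S then insert (r + 1) (openRows D S c r)
    else if (r + 1, c) ∈ D ∧ r + 1 ∉ S then
      (if h : (openRows D S c r).Nonempty then
        (openRows D S c r).erase ((openRows D S c r).max' h)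
      else openRows D S c r)
    else openRows D S c r := rfl

lemma mem_openRows {x t : ℕ} (hx : x ∈ openRows D S c t) :
    x ∈ S ∧ (x, c) ∉ D ∧ 1 ≤ x ∧ x ≤ t := by
  induction t with
  | zero => simp [openRows_zero] at hx
  | succ r ih =>
    rw [openRows_succ] at hx
    split_ifs at hx with h1 h2 h3
    · rcases mem_insert.mp hx with rfl | hx'
      · exact ⟨h1.2, h1.1, by omega, le_rfl⟩
      · obtain ⟨a, b, hc, hd⟩ := ih hx'
        exact ⟨a, b, hc, by omega⟩
    · obtain ⟨a, b, hc, hd⟩ := ih (mem_of_mem_erase hx)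
      exact ⟨a, b, hc, by omega⟩
    · obtain ⟨a, b, hc, hd⟩ := ih hx
      exact ⟨a, b, hc, by omega⟩
    · obtain ⟨a, b, hc, hd⟩ := ih hx
      exact ⟨a, b, hc, by omega⟩

lemma not_mem_openRows_of_le {x t t' : ℕ} (hx : x ≤ t) (h : x ∉ openRows D S c t)
    (htt : t ≤ t') : x ∉ openRows D S c t' := by
  induction t', htt using Nat.le_induction with
  | base => exact h
  | succ m hm ih =>
    rw [openRows_succ]
    split_ifs with h1 h2 h3
    · intro hmem
      rcases mem_insert.mp hmem with heq | h'
      · omega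
      · exact ih h'
    · intro hmem; exact ih (mem_of_mem_erase hmem)
    · exact ih
    · exact ih

end Aux
section Aux2

open Finset

variable {D : Finset (ℕ × ℕ)} {S : Finset ℕ} {c n : ℕ}

lemma pushes_eq_pops (t : ℕ) :
    ((Finset.Icc 1 t).filter fun r => r ∈ S ∧ (r, c) ∉ D).card
      = (openRows D S c t).card +
        ((Finset.Icc 1 t).filter fun r =>
          (r, c) ∈ D ∧ r ∉ S ∧ (openRows D S c (r - 1)).Nonempty).card := by
  induction t with
  | zero => simp [openRows_zero]
  | succ t ih =>
    have hins : Finset.Icc 1 (t + 1) = insert (t + 1) (Finset.Icc 1 t) := by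
      ext r; simp [Finset.mem_Icc, Finset.mem_insert]; omega
    have hnotmem : (t + 1) ∉ Finset.Icc 1 t := by simp
    rw [hins, Finset.filter_insert, Finset.filter_insert, openRows_succ]
    by_cases hd : (t + 1, c) ∈ D
    · have hA : ¬(t + 1 ∈ S ∧ (t + 1, c) ∉ D) := by tauto
      have hB : ¬((t + 1, c) ∉ D ∧ t + 1 ∈ S) := by tauto
      rw [if_neg hA, if_neg hB]
      by_cases hs : t + 1 ∈ S
      · have hB2 : ¬((t + 1, c) ∈ D ∧ t + 1 ∉ S) := by tauto
        have hC : ¬((t + 1, c) ∈ D ∧ t + 1 ∉ S ∧ (openRows D S c (t + 1 - 1)).Nonempty) := by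
          tauto
        rw [if_neg hB2, if_neg hC]
        exact ih
      · rw [if_pos ⟨hd, hs⟩]
        by_cases h3 : (openRows D S c t).Nonempty
        · have hC : (t + 1, c) ∈ D ∧ t + 1 ∉ S ∧ (openRows D S c (t + 1 - 1)).Nonempty :=
            ⟨hd, hs, h3⟩
          rw [dif_pos h3, if_pos hC,
            Finset.card_insert_of_notMem (fun h => hnotmem (Finset.mem_of_mem_filter _ h)),
            Finset.card_erase_of_mem (Finset.max'_mem _ h3)]
          have : 0 < (openRows D S c t).card := Finset.card_pos.mpr h3
          omega
        · have hC : ¬((t + 1, c) ∈ D ∧ t + 1 ∉ S ∧ (openRows D S c (t + 1 - 1)).Nonempty) :=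
            fun h => h3 h.2.2
          rw [dif_neg h3, if_neg hC]
          exact ih
    · have hC : ¬((t + 1, c) ∈ D ∧ t + 1 ∉ S ∧ (openRows D S c (t + 1 - 1)).Nonempty) := by
        tauto
      rw [if_neg hC]
      by_cases hs : t + 1 ∈ S
      · rw [if_pos ⟨hs, hd⟩, if_pos ⟨hd, hs⟩,
          Finset.card_insert_of_notMem (fun h => hnotmem (Finset.mem_of_mem_filter _ h)),
          Finset.card_insert_of_notMem (fun h => by have := (mem_openRows h).2.2.2; omega)]
        omega
      · have hA : ¬(t + 1 ∈ S ∧ (t + 1, c) ∉ D) := by tauto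
        have hB : ¬((t + 1, c) ∉ D ∧ t + 1 ∈ S) := by tauto
        have hB2 : ¬((t + 1, c) ∈ D ∧ t + 1 ∉ S) := by tauto
        rw [if_neg hA, if_neg hB, if_neg hB2]
        exact ih

end Aux2
section Aux3

open Finset

variable {D : Finset (ℕ × ℕ)} {S : Finset ℕ} {c n : ℕ}

lemma piLabel_S {r c : ℕ} (hd : (r, c) ∈ D) (hs : r ∈ S) :
    piLabel D S r c = some r := by
  unfold piLabel; rw [if_pos hd, if_pos hs]

lemma piLabel_notS {r c l : ℕ} (hd : (r, c) ∈ D) (hs : r ∉ S)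
    (hl : piLabel D S r c = some l) :
    ∃ h : (openRows D S c (r - 1)).Nonempty, l = (openRows D S c (r - 1)).max' h := by
  unfold piLabel at hl; rw [if_pos hd, if_neg hs] at hl
  by_cases h : (openRows D S c (r - 1)).Nonempty
  · rw [dif_pos h] at hl; exact ⟨h, (Option.some_inj.mp hl).symm⟩
  · rw [dif_neg h] at hl; simp at hl

lemma piLabel_inj_lt (hD : D ⊆ grid n) {r1 r2 c l : ℕ} (h1 : (r1, c) ∈ D)
    (h2 : (r2, c) ∈ D) (hlt : r1 < r2) (hl1 : piLabel D S r1 c = some l)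
    (hl2 : piLabel D S r2 c = some l) : False := by
  have hr1 : 1 ≤ r1 := (Finset.mem_Icc.mp (Finset.mem_product.mp (hD h1)).1).1
  by_cases hs1 : r1 ∈ S <;> by_cases hs2 : r2 ∈ S
  · rw [piLabel_S h1 hs1] at hl1; rw [piLabel_S h2 hs2] at hl2
    rw [Option.some_inj] at hl1 hl2; omega
  · obtain ⟨hne, rfl⟩ := piLabel_notS h2 hs2 hl2
    rw [piLabel_S h1 hs1, Option.some_inj] at hl1
    have := (mem_openRows (Finset.max'_mem _ hne)).2.1
    rw [← hl1] at this; exact this h1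
  · obtain ⟨hne, rfl⟩ := piLabel_notS h1 hs1 hl1
    rw [piLabel_S h2 hs2, Option.some_inj] at hl2
    have := (mem_openRows (Finset.max'_mem _ hne)).2.2.2
    omega
  · obtain ⟨hne1, hl1'⟩ := piLabel_notS h1 hs1 hl1
    obtain ⟨hne2, hl2'⟩ := piLabel_notS h2 hs2 hl2
    obtain ⟨m, rfl⟩ : ∃ m, r1 = m + 1 := ⟨r1 - 1, by omega⟩
    simp only [Nat.add_sub_cancel] at hne1 hl1'
    have hstep : openRows D S c (m + 1)
        = (openRows D S c m).erase ((openRows D S c m).max' hne1) := by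
      rw [openRows_succ, if_neg (by tauto), if_pos ⟨h1, hs1⟩, dif_pos hne1]
    have hnot : l ∉ openRows D S c (m + 1) := by
      rw [hstep, hl1']; exact Finset.notMem_erase _ _
    have hle : l ≤ m + 1 := by
      have := (mem_openRows (Finset.max'_mem _ hne1)).2.2.2
      omega
    have : l ∉ openRows D S c (r2 - 1) :=
      not_mem_openRows_of_le hle hnot (by omega)
    exact this (hl2' ▸ Finset.max'_mem _ hne2)

lemma colInj_pi (hD : D ⊆ grid n) : ColInj D (fun b => piLabel D S b.1 b.2) := by
  rintro ⟨r1, c1⟩ h1 ⟨r2, c2⟩ h2 hcol hne l hl1 hl2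
  simp only at hcol hl1 hl2
  subst hcol
  rcases lt_trichotomy r1 r2 with h | h | h
  · exact piLabel_inj_lt hD h1 h2 h hl1 hl2
  · exact hne (by rw [h])
  · exact piLabel_inj_lt hD h2 h1 h hl2 hl1

lemma isTab_pi (hD : D ⊆ grid n) (hS : S ⊆ Finset.Icc 1 n) :
    IsTab n D (fun b => piLabel D S b.1 b.2) := by
  constructor
  · intro b hb
    simp only
    unfold piLabel
    rw [if_neg (by rwa [Prod.mk.eta])]
  · rintro ⟨r, c⟩ hb l hl
    simp only at hl
    by_cases hs : r ∈ S
    · rw [piLabel_S hb hs, Option.some_inj] at hl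
      subst hl
      exact (Finset.mem_product.mp (hD hb)).1
    · obtain ⟨hne, rfl⟩ := piLabel_notS hb hs hl
      exact hS (mem_openRows (Finset.max'_mem _ hne)).1

lemma flagged_pi : Flagged D (fun b => piLabel D S b.1 b.2) := by
  rintro ⟨r, c⟩ hb l hl
  simp only at hl ⊢
  by_cases hs : r ∈ S
  · rw [piLabel_S hb hs, Option.some_inj] at hl; omega
  · obtain ⟨hne, rfl⟩ := piLabel_notS hb hs hl
    have := (mem_openRows (Finset.max'_mem _ hne)).2.2.2
    omega

end Aux3
section Aux4

open Finset

variable {D : Finset (ℕ × ℕ)} {S : Finset ℕ} {c n : ℕ}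

lemma piCol_count (c : ℕ) :
    ((Finset.Icc 1 n).filter fun r =>
        (r, c) ∈ D ∧ ∃ s ∈ S, piLabel D S r c = some s).card
      = thetaCol n D S c := by
  unfold thetaCol
  rw [← Finset.card_union_of_disjoint (by
      simp only [Finset.disjoint_left, Finset.mem_filter]
      rintro a ⟨-, -, ha⟩ ⟨-, -, ha', -⟩
      exact ha' ha),
    ← Finset.filter_or]
  congr 1
  apply Finset.filter_congr
  intro r _
  constructor
  · rintro ⟨hd, s, hsS, hl⟩
    by_cases hs : r ∈ S
    · exact Or.inl ⟨hd, hs⟩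
    · exact Or.inr ⟨hd, hs, (piLabel_notS hd hs hl).1⟩
  · rintro (⟨hd, hs⟩ | ⟨hd, hs, hne⟩)
    · exact ⟨hd, r, hs, piLabel_S hd hs⟩
    · refine ⟨hd, (openRows D S c (r - 1)).max' hne,
        (mem_openRows (Finset.max'_mem _ hne)).1, ?_⟩
      unfold piLabel
      rw [if_pos hd, if_neg hs, dif_pos hne]

lemma card_filter_eq_sum_cols (hD : D ⊆ grid n) (P : ℕ × ℕ → Prop) [DecidablePred P] :
    (D.filter P).card
      = ∑ c ∈ Finset.Icc 1 n,
          ((Finset.Icc 1 n).filter fun r => (r, c) ∈ D ∧ P (r, c)).card := by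
  rw [Finset.card_eq_sum_card_fiberwise (f := Prod.snd) (t := Finset.Icc 1 n)
    (fun b hb => (Finset.mem_product.mp (hD (Finset.mem_of_mem_filter _ hb))).2)]
  refine Finset.sum_congr rfl fun c hc => ?_
  refine Finset.card_bij' (fun b _ => b.1) (fun r _ => (r, c)) ?_ ?_ ?_ ?_
  · intro b hb
    simp only [Finset.mem_filter] at hb ⊢
    obtain ⟨⟨hbD, hbP⟩, hbc⟩ := hb
    have hb' : (b.1, c) = b := by rw [← hbc]
    refine ⟨(Finset.mem_product.mp (hD hbD)).1, ?_, ?_⟩ <;> rw [hb'] <;> assumption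
  · intro r hr
    simp only [Finset.mem_filter] at hr ⊢
    exact ⟨⟨hr.2.1, hr.2.2⟩, by simp⟩
  · rintro ⟨x, y⟩ hb
    simp only [Finset.mem_filter] at hb
    simp [hb.2]
  · intro r hr
    rfl

end Aux4
section Aux5

open Finset

variable {D : Finset (ℕ × ℕ)} {S : Finset ℕ} {n : ℕ}

lemma col_upper (hD : D ⊆ grid n) (hS : S ⊆ Finset.Icc 1 n) {τ : ℕ × ℕ → Option ℕ}
    (hF : Flagged D τ) (hC : ColInj D τ) (c : ℕ) :
    ((Finset.Icc 1 n).filter fun r => (r, c) ∈ D ∧ ∃ s ∈ S, τ (r, c) = some s).card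
      ≤ thetaCol n D S c := by
  classical
  have hTne : ((Finset.range (n + 1)).filter fun t => openRows D S c t = ∅).Nonempty :=
    ⟨0, by simp [openRows_zero]⟩
  obtain ⟨t0, ht0mem, ht0max⟩ :
      ∃ t0, t0 ∈ (Finset.range (n + 1)).filter (fun t => openRows D S c t = ∅) ∧
        ∀ t ∈ (Finset.range (n + 1)).filter (fun t => openRows D S c t = ∅), t ≤ t0 :=
    ⟨_, Finset.max'_mem _ hTne, fun t ht => Finset.le_max' _ t ht⟩
  rw [Finset.mem_filter, Finset.mem_range] at ht0mem
  have ht0n : t0 ≤ n := by omega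
  have ht0e : openRows D S c t0 = ∅ := ht0mem.2
  have hmax : ∀ t, t0 < t → t ≤ n → openRows D S c t ≠ ∅ := by
    intro t h1 h2 hcon
    have := ht0max t (by rw [Finset.mem_filter, Finset.mem_range]; exact ⟨by omega, hcon⟩)
    omega
  have ha : ∀ r, t0 < r → r ≤ n → (r, c) ∈ D → r ∉ S →
      (openRows D S c (r - 1)).Nonempty := by
    intro r h1 h2 hd hs
    rw [Finset.nonempty_iff_ne_empty]
    intro hemp
    obtain ⟨m, rfl⟩ : ∃ m, r = m + 1 := ⟨r - 1, by omega⟩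
    simp only [Nat.add_sub_cancel] at hemp
    rcases eq_or_lt_of_le (show t0 ≤ m by omega) with heq | hlt
    · have hstep : openRows D S c (m + 1) = ∅ := by
        rw [openRows_succ, if_neg (by tauto), if_pos ⟨hd, hs⟩,
          dif_neg (by rw [Finset.not_nonempty_iff_eq_empty]; exact hemp)]
        exact hemp
      exact hmax (m + 1) h1 h2 hstep
    · exact hmax m hlt (by omega) hemp
  -- the three filters
  set L : Finset ℕ := (Finset.Icc 1 n).filter
    (fun r => (r, c) ∈ D ∧ ∃ s ∈ S, τ (r, c) = some s) with hL
  set F1 : Finset ℕ := (Finset.Icc 1 n).filter (fun r => (r, c) ∈ D ∧ r ∈ S) with hF1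
  set F2 : Finset ℕ := (Finset.Icc 1 n).filter
    (fun r => (r, c) ∈ D ∧ r ∉ S ∧ (openRows D S c (r - 1)).Nonempty) with hF2
  have htheta : thetaCol n D S c = F1.card + F2.card := rfl
  have hsplit : ∀ F : Finset ℕ,
      F.card = (F.filter fun r => r ≤ t0).card + (F.filter fun r => ¬ r ≤ t0).card := by
    intro F
    conv_lhs => rw [← Finset.filter_union_filter_not_eq (fun r => r ≤ t0) F]
    exact Finset.card_union_of_disjoint (Finset.disjoint_filter_filter_not F F _)
  -- upper rows
  have hupper : (L.filter fun r => ¬ r ≤ t0).card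
      ≤ (F1.filter fun r => ¬ r ≤ t0).card + (F2.filter fun r => ¬ r ≤ t0).card := by
    refine le_trans (Finset.card_le_card ?_) (Finset.card_union_le _ _)
    intro r hr
    simp only [hL, hF1, hF2, Finset.mem_filter, Finset.mem_union, Finset.mem_Icc] at hr ⊢
    obtain ⟨⟨hrn, hd, -⟩, hgt⟩ := hr
    by_cases hs : r ∈ S
    · exact Or.inl ⟨⟨hrn, hd, hs⟩, hgt⟩
    · exact Or.inr ⟨⟨hrn, hd, hs, ha r (by omega) hrn.2 hd hs⟩, hgt⟩
  -- lower rows: inject into S ∩ [1, t0]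
  have hlow1 : (L.filter fun r => r ≤ t0).card ≤ (S.filter fun s => s ≤ t0).card := by
    apply Finset.card_le_card_of_injOn (fun r => (τ (r, c)).getD 0)
    · intro r hr
      simp only [hL, Finset.mem_coe, Finset.mem_filter] at hr ⊢
      obtain ⟨⟨hrn, hd, s, hsS, heq⟩, hle⟩ := hr
      rw [heq]
      exact ⟨hsS, le_trans (hF (r, c) hd s heq) hle⟩
    · intro r1 hr1 r2 hr2 heq
      simp only [hL, Finset.coe_filter, Set.mem_setOf_eq, Finset.mem_filter,
        Finset.mem_Icc] at hr1 hr2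
      obtain ⟨⟨hrn1, hd1, s1, hsS1, heq1⟩, -⟩ := hr1
      obtain ⟨⟨hrn2, hd2, s2, hsS2, heq2⟩, -⟩ := hr2
      simp only [heq1, heq2, Option.getD_some] at heq
      subst heq
      by_contra hne
      exact hC (r1, c) hd1 (r2, c) hd2 rfl (by simp [hne]) s1 heq1 heq2
  have hlow2 : (S.filter fun s => s ≤ t0).card
      = (F2.filter fun r => r ≤ t0).card + (F1.filter fun r => r ≤ t0).card := by
    have e1 : (S.filter fun s => s ≤ t0)
        = (S.filter fun s => ((s, c) ∉ D ∧ s ≤ t0)) ∪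
          (S.filter fun s => ((s, c) ∈ D ∧ s ≤ t0)) := by
      rw [← Finset.filter_or]
      apply Finset.filter_congr
      intro s _
      tauto
    have hdisj : Disjoint (S.filter fun s => ((s, c) ∉ D ∧ s ≤ t0))
        (S.filter fun s => ((s, c) ∈ D ∧ s ≤ t0)) := by
      simp only [Finset.disjoint_left, Finset.mem_filter]
      rintro a ⟨-, ha, -⟩ ⟨-, ha', -⟩
      exact ha ha'
    have e2 : (S.filter fun s => ((s, c) ∉ D ∧ s ≤ t0))
        = (Finset.Icc 1 t0).filter fun r => r ∈ S ∧ (r, c) ∉ D := by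
      ext r
      simp only [Finset.mem_filter, Finset.mem_Icc]
      constructor
      · rintro ⟨h1, h2, h3⟩
        have := Finset.mem_Icc.mp (hS h1)
        exact ⟨⟨by omega, h3⟩, h1, h2⟩
      · rintro ⟨⟨-, h3⟩, h1, h2⟩
        exact ⟨h1, h2, h3⟩
    have e3 : (S.filter fun s => ((s, c) ∈ D ∧ s ≤ t0))
        = F1.filter fun r => r ≤ t0 := by
      ext r
      simp only [hF1, Finset.mem_filter, Finset.mem_Icc]
      constructor
      · rintro ⟨h1, h2, h3⟩
        have := Finset.mem_Icc.mp (hS h1)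
        exact ⟨⟨⟨by omega, by omega⟩, h2, h1⟩, h3⟩
      · rintro ⟨⟨-, h2, h1⟩, h3⟩
        exact ⟨h1, h2, h3⟩
    have e4 : (F2.filter fun r => r ≤ t0)
        = (Finset.Icc 1 t0).filter fun r =>
            (r, c) ∈ D ∧ r ∉ S ∧ (openRows D S c (r - 1)).Nonempty := by
      ext r
      simp only [hF2, Finset.mem_filter, Finset.mem_Icc]
      constructor
      · rintro ⟨⟨⟨h1a, h1b⟩, h⟩, h3⟩
        exact ⟨⟨h1a, h3⟩, h⟩
      · rintro ⟨⟨h1, h3⟩, h⟩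
        exact ⟨⟨⟨h1, by omega⟩, h⟩, h3⟩
    rw [e1, Finset.card_union_of_disjoint hdisj, e2, e3, e4]
    congr 1
    rw [pushes_eq_pops, ht0e]
    simp
  calc L.card
      = (L.filter fun r => r ≤ t0).card + (L.filter fun r => ¬ r ≤ t0).card := hsplit L
    _ ≤ (S.filter fun s => s ≤ t0).card
        + ((F1.filter fun r => ¬ r ≤ t0).card + (F2.filter fun r => ¬ r ≤ t0).card) :=
      add_le_add hlow1 hupper
    _ = ((F2.filter fun r => r ≤ t0).card + (F1.filter fun r => r ≤ t0).card)
        + ((F1.filter fun r => ¬ r ≤ t0).card + (F2.filter fun r => ¬ r ≤ t0).card) := by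
      rw [hlow2]
    _ = ((F1.filter fun r => r ≤ t0).card + (F1.filter fun r => ¬ r ≤ t0).card)
        + ((F2.filter fun r => r ≤ t0).card + (F2.filter fun r => ¬ r ≤ t0).card) := by
      omega
    _ = F1.card + F2.card := by rw [← hsplit F1, ← hsplit F2]
    _ = thetaCol n D S c := htheta.symm

end Aux5
section Main

open Finset

lemma labInv_pi_card {n : ℕ} {D : Finset (ℕ × ℕ)} {S : Finset ℕ} (hD : D ⊆ grid n) :
    (labInv D (fun b => piLabel D S b.1 b.2) S).card = theta n D S := by
  unfold labInv theta
  rw [card_filter_eq_sum_cols hD (fun b => ∃ s ∈ S, piLabel D S b.1 b.2 = some s)]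
  exact Finset.sum_congr rfl fun c _ => piCol_count c

lemma labInv_card_le_theta {n : ℕ} {D : Finset (ℕ × ℕ)} {S : Finset ℕ}
    (hD : D ⊆ grid n) (hS : S ⊆ Finset.Icc 1 n) {τ : ℕ × ℕ → Option ℕ}
    (hF : Flagged D τ) (hC : ColInj D τ) :
    (labInv D τ S).card ≤ theta n D S := by
  unfold labInv theta
  rw [card_filter_eq_sum_cols hD (fun b => ∃ s ∈ S, τ b = some s)]
  exact Finset.sum_le_sum fun c _ => col_upper hD hS hF hC c

end Main
/-- Let `D ⊆ [n]²` and `α ∈ ℤ_{≥0}^n` with `α₁+⋯+α_n = #D`.  Then `α ∈ S_D` iff for every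
`S ⊆ [n]` there is a flagged column-injective tableau `τ` of shape `D` with
`Σ_{i∈S} α_i ≤ #τ⁻¹(S)`. -/
theorem schubitope_iff_exhausting_tableaux (n : ℕ) (D : Finset (ℕ × ℕ)) (hD : D ⊆ grid n)
    (α : ℕ → ℕ) (hsum : (∑ i ∈ Finset.Icc 1 n, α i) = D.card) :
    InSchubitope n D α ↔
      ∀ S ⊆ Finset.Icc 1 n, ∃ τ : ℕ × ℕ → Option ℕ,
        IsTab n D τ ∧ Flagged D τ ∧ ColInj D τ ∧ (∑ i ∈ S, α i) ≤ (labInv D τ S).card := by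
  constructor
  · rintro ⟨-, hθ⟩ S hSsub
    refine ⟨fun b => piLabel D S b.1 b.2, isTab_pi hD hSsub, flagged_pi, colInj_pi hD, ?_⟩
    rw [labInv_pi_card hD]
    exact hθ S hSsub
  · intro h
    refine ⟨hsum, fun S hSsub => ?_⟩
    obtain ⟨τ, hTab, hF, hC, hle⟩ := h S hSsub
    exact hle.trans (labInv_card_le_theta hD hSsub hF hC)

end Schub
end

section
/- Let D ⊆ [n]² and α ∈ ℤ_{≥0}^n. Then α ∈ S_D if and only if there exists a perfect tableau of shape D and content α, i.e., a filling of every box of D with entries in [n] such that the entry in any box of row r is at most r, entries in each column are distinct, and exactly α_i boxes carry entry i. -/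
namespace Schub

-- auxiliary counting functions
def stv (D : Finset (ℕ × ℕ)) (S : Finset ℕ) (c m : ℕ) : ℕ :=
  ((Finset.Icc 1 m).filter fun r => (r, c) ∈ D ∧ r ∈ S).card

def mtv (D : Finset (ℕ × ℕ)) (S : Finset ℕ) (c m : ℕ) : ℕ :=
  ((Finset.Icc 1 m).filter fun r =>
      (r, c) ∈ D ∧ r ∉ S ∧ (openRows D S c (r - 1)).Nonempty).card

def scv (S : Finset ℕ) (m : ℕ) : ℕ := (S ∩ Finset.Icc 1 m).card

def bbv (D : Finset (ℕ × ℕ)) (c p m : ℕ) : ℕ :=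
  ((Finset.Icc 1 m).filter fun r => (r, c) ∈ D ∧ p < r).card

def gmv (D : Finset (ℕ × ℕ)) (S : Finset ℕ) (c m : ℕ) : ℕ :=
  (Finset.range (m + 1)).inf' ⟨0, by simp⟩ fun p => scv S p + bbv D c p m

lemma openRows_subset (D : Finset (ℕ × ℕ)) (S : Finset ℕ) (c : ℕ) :
    ∀ m, openRows D S c m ⊆ Finset.Icc 1 m := by
  intro m
  induction m with
  | zero => simp [openRows]
  | succ m ih =>
    have hsub : Finset.Icc 1 m ⊆ Finset.Icc 1 (m+1) :=
      Finset.Icc_subset_Icc_right (by omega)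
    rw [openRows]
    split_ifs with h1 h2 h3
    · exact Finset.insert_subset (by simp) (ih.trans hsub)
    · exact ((Finset.erase_subset _ _).trans ih).trans hsub
    · exact ih.trans hsub
    · exact ih.trans hsub

lemma scv_succ (S : Finset ℕ) (m : ℕ) :
    scv S (m+1) = scv S m + (if m+1 ∈ S then 1 else 0) := by
  unfold scv
  have : S ∩ Finset.Icc 1 (m+1) =
      if m+1 ∈ S then insert (m+1) (S ∩ Finset.Icc 1 m) else S ∩ Finset.Icc 1 m := by
    split_ifs with h
    · ext a
      simp only [Finset.mem_inter, Finset.mem_Icc, Finset.mem_insert]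
      constructor
      · rintro ⟨ha, h1, h2⟩
        rcases Nat.lt_or_ge a (m+1) with h' | h'
        · right; exact ⟨ha, h1, by omega⟩
        · left; omega
      · rintro (rfl | ⟨ha, h1, h2⟩)
        · exact ⟨h, by omega, le_rfl⟩
        · exact ⟨ha, h1, by omega⟩
    · ext a
      simp only [Finset.mem_inter, Finset.mem_Icc]
      constructor
      · rintro ⟨ha, h1, h2⟩
        refine ⟨ha, h1, ?_⟩
        rcases Nat.lt_or_ge a (m+1) with h' | h'
        · omega
        · exfalso; have : a = m+1 := by omega
          exact h (this ▸ ha)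
      · rintro ⟨ha, h1, h2⟩; exact ⟨ha, h1, by omega⟩
  rw [this]
  split_ifs with h
  · rw [Finset.card_insert_of_notMem (by simp [Finset.mem_Icc])]
  · simp

lemma filter_Icc_succ_card (P : ℕ → Prop) [DecidablePred P] (m : ℕ) :
    ((Finset.Icc 1 (m+1)).filter P).card
      = ((Finset.Icc 1 m).filter P).card + (if P (m+1) then 1 else 0) := by
  have h : Finset.Icc 1 (m+1) = insert (m+1) (Finset.Icc 1 m) := by
    ext a
    simp only [Finset.mem_Icc, Finset.mem_insert]
    omega
  rw [h, Finset.filter_insert]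
  split_ifs with hp
  · rw [Finset.card_insert_of_notMem (by simp [Finset.mem_Icc])]
  · simp

lemma gmv_succ (D : Finset (ℕ × ℕ)) (S : Finset ℕ) (c m : ℕ) :
    gmv D S c (m+1)
      = min (gmv D S c m + (if (m+1, c) ∈ D then 1 else 0)) (scv S (m+1)) := by
  unfold gmv
  have e1 : (Finset.range (m + 1 + 1)).inf' ⟨0, by simp⟩
        (fun p => scv S p + bbv D c p (m+1))
      = (scv S (m+1) + bbv D c (m+1) (m+1)) ⊓
        ((Finset.range (m + 1)).inf' ⟨0, by simp⟩ (fun p => scv S p + bbv D c p (m+1))) := by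
    exact (Finset.inf'_congr ⟨0, by simp⟩ (Finset.range_add_one) (fun x _ => rfl)).trans
      (Finset.inf'_insert _ _)
  rw [e1]
  have h1 : ∀ p ∈ Finset.range (m+1),
      scv S p + bbv D c p (m+1)
        = (fun p => scv S p + bbv D c p m + (if (m+1, c) ∈ D then 1 else 0)) p := by
    intro p hp
    simp only [Finset.mem_range] at hp
    have : bbv D c p (m+1) = bbv D c p m + (if (m+1, c) ∈ D then 1 else 0) := by
      unfold bbv
      rw [filter_Icc_succ_card]
      congr 1
      by_cases hb : (m+1, c) ∈ D <;> simp [hb, Nat.lt_succ_of_lt, hp] <;> omega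
    rw [this]
    exact (add_assoc _ _ _).symm
  rw [Finset.inf'_congr (H := ⟨0, by simp⟩) rfl h1]
  have h2 : (Finset.range (m+1)).inf' ⟨0, by simp⟩
        (fun p => scv S p + bbv D c p m + (if (m+1, c) ∈ D then 1 else 0))
      = gmv D S c m + (if (m+1, c) ∈ D then 1 else 0) := by
    unfold gmv
    exact (Finset.apply_inf'_eq_inf'_comp _ (fun x => x + (if (m+1, c) ∈ D then 1 else 0))
      (fun x y => by simp [min_add_add_right])).symm
  rw [h2]
  have h3 : bbv D c (m+1) (m+1) = 0 := by
    unfold bbv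
    rw [Finset.card_eq_zero]
    ext r
    simp only [Finset.mem_filter, Finset.mem_Icc, Finset.notMem_empty, iff_false]
    omega
  rw [h3, add_zero, inf_comm]
  rfl


lemma invariants (D : Finset (ℕ × ℕ)) (S : Finset ℕ) (c : ℕ) :
    ∀ m, (stv D S c m + mtv D S c m = gmv D S c m) ∧
      (scv S m = gmv D S c m + (openRows D S c m).card) := by
  intro m
  induction m with
  | zero =>
    constructor
    · unfold stv mtv gmv scv bbv
      simp
    · unfold scv gmv bbv
      simp [openRows, scv]
  | succ m ih =>
    obtain ⟨ih1, ih2⟩ := ih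
    have hgs : gmv D S c m ≤ scv S m := by omega
    have hst : stv D S c (m+1)
        = stv D S c m + (if (m+1, c) ∈ D ∧ m+1 ∈ S then 1 else 0) :=
      filter_Icc_succ_card _ m
    have hmt : mtv D S c (m+1)
        = mtv D S c m + (if (m+1, c) ∈ D ∧ m+1 ∉ S ∧ (openRows D S c m).Nonempty
            then 1 else 0) := by
      have h := filter_Icc_succ_card
        (fun r => (r, c) ∈ D ∧ r ∉ S ∧ (openRows D S c (r-1)).Nonempty) m
      simpa [mtv] using h
    have hsc := scv_succ S m
    have hgm := gmv_succ D S c m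
    by_cases hbox : (m+1, c) ∈ D
    · by_cases hinS : m+1 ∈ S
      · -- star
        have hu : openRows D S c (m+1) = openRows D S c m := by
          rw [openRows]
          simp [hbox, hinS]
        simp only [hbox, hinS, not_true_eq_false, and_true, true_and, and_false,
          false_and, if_true, if_false] at hst hmt hsc hgm
        rw [hu]
        omega
      · by_cases hne : (openRows D S c m).Nonempty
        · -- matched closer
          have hcard : 1 ≤ (openRows D S c m).card := Finset.card_pos.mpr hne
          have hu : (openRows D S c (m+1)).card = (openRows D S c m).card - 1 := by
            rw [openRows]
            simp only [hbox, hinS, not_true_eq_false, and_false, false_and, if_false,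
              not_false_eq_true, and_true, true_and, if_true, hne, dite_true]
            exact Finset.card_erase_of_mem (Finset.max'_mem _ hne)
          simp only [hbox, hinS, hne, not_true_eq_false, not_false_eq_true, and_true,
            true_and, and_false, false_and, if_true, if_false] at hst hmt hsc hgm
          omega
        · -- unmatched closer
          have hu : openRows D S c (m+1) = openRows D S c m := by
            rw [openRows]
            simp [hbox, hinS, hne]
          have hu0 : (openRows D S c m).card = 0 := by
            simp [Finset.not_nonempty_iff_eq_empty.mp hne]
          simp only [hbox, hinS, hne, not_true_eq_false, not_false_eq_true, and_true,
            true_and, and_false, false_and, if_true, if_false] at hst hmt hsc hgm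
          rw [hu]
          omega
    · by_cases hinS : m+1 ∈ S
      · -- opener
        have hnm : m+1 ∉ openRows D S c m :=
          fun h => by simpa using Finset.mem_Icc.mp (openRows_subset D S c m h)
        have hu : (openRows D S c (m+1)).card = (openRows D S c m).card + 1 := by
          rw [openRows]
          simp only [hbox, hinS, not_false_eq_true, and_true, true_and, if_true]
          exact Finset.card_insert_of_notMem hnm
        simp only [hbox, hinS, not_true_eq_false, not_false_eq_true, and_true, true_and,
          and_false, false_and, if_true, if_false] at hst hmt hsc hgm
        omega
      · -- blank
        have hu : openRows D S c (m+1) = openRows D S c m := by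
          rw [openRows]
          simp [hbox, hinS]
        simp only [hbox, hinS, not_false_eq_true, and_true, true_and, and_false,
          false_and, if_true, if_false] at hst hmt hsc hgm
        rw [hu]
        omega


lemma thetaCol_eq_gmv (n : ℕ) (D : Finset (ℕ × ℕ)) (S : Finset ℕ) (c : ℕ) :
    thetaCol n D S c = gmv D S c n :=
  (invariants D S c n).1

lemma gmv_le (n : ℕ) (D : Finset (ℕ × ℕ)) (S : Finset ℕ) (c : ℕ) {p : ℕ} (hp : p ≤ n) :
    gmv D S c n ≤ scv S p + bbv D c p n :=
  Finset.inf'_le _ (by simpa [Finset.mem_range] using Nat.lt_succ_of_le hp)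

lemma gmv_empty (n : ℕ) (D : Finset (ℕ × ℕ)) (c : ℕ) : gmv D ∅ c n = 0 := by
  have h1 : gmv D ∅ c n ≤ scv ∅ n + bbv D c n n := gmv_le n D ∅ c le_rfl
  have h2 : scv ∅ n = 0 := by simp [scv]
  have h3 : bbv D c n n = 0 := by
    rw [bbv, Finset.card_eq_zero]
    ext r
    simp only [Finset.mem_filter, Finset.mem_Icc, Finset.notMem_empty, iff_false]
    omega
  omega

lemma gmv_singleton_le_one (n : ℕ) (D : Finset (ℕ × ℕ)) (c i : ℕ) :
    gmv D {i} c n ≤ 1 := by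
  have h1 : gmv D {i} c n ≤ scv {i} n + bbv D c n n := gmv_le n D {i} c le_rfl
  have h2 : scv {i} n ≤ 1 := by
    refine le_trans (Finset.card_le_card (Finset.inter_subset_left)) (by simp)
  have h3 : bbv D c n n = 0 := by
    rw [bbv, Finset.card_eq_zero]
    ext r
    simp only [Finset.mem_filter, Finset.mem_Icc, Finset.notMem_empty, iff_false]
    omega
  omega

lemma gmv_mono (n : ℕ) (D : Finset (ℕ × ℕ)) (c : ℕ) {S T : Finset ℕ} (h : S ⊆ T) :
    gmv D S c n ≤ gmv D T c n := by
  refine Finset.le_inf' _ _ fun p hp => ?_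
  refine le_trans (Finset.inf'_le _ hp) ?_
  exact Nat.add_le_add_right
    (Finset.card_le_card (Finset.inter_subset_inter h Finset.Subset.rfl)) _

lemma card_inter_Icc_split (X : Finset ℕ) {p q : ℕ} (hpq : p ≤ q) :
    (X ∩ Finset.Icc 1 q).card
      = (X ∩ Finset.Icc 1 p).card + (X ∩ Finset.Ioc p q).card := by
  have hsplit : Finset.Icc 1 q = Finset.Icc 1 p ∪ Finset.Ioc p q := by
    ext a
    simp only [Finset.mem_Icc, Finset.mem_union, Finset.mem_Ioc]
    omega
  rw [hsplit, Finset.inter_union_distrib_left]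
  refine Finset.card_union_of_disjoint ?_
  refine Finset.disjoint_left.mpr fun a ha hb => ?_
  simp only [Finset.mem_inter, Finset.mem_Icc, Finset.mem_Ioc] at ha hb
  omega

lemma key_card_ineq (S T : Finset ℕ) {p q : ℕ} (hpq : p ≤ q) :
    ((S ∪ T) ∩ Finset.Icc 1 p).card + ((S ∩ T) ∩ Finset.Icc 1 q).card
      ≤ (S ∩ Finset.Icc 1 p).card + (T ∩ Finset.Icc 1 q).card := by
  have h1 : ((S ∪ T) ∩ Finset.Icc 1 p).card + ((S ∩ T) ∩ Finset.Icc 1 p).card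
      = (S ∩ Finset.Icc 1 p).card + (T ∩ Finset.Icc 1 p).card := by
    rw [Finset.union_inter_distrib_right]
    have : (S ∩ Finset.Icc 1 p) ∩ (T ∩ Finset.Icc 1 p) = (S ∩ T) ∩ Finset.Icc 1 p := by
      ext a; simp only [Finset.mem_inter]; tauto
    rw [← this]
    exact Finset.card_union_add_card_inter _ _
  have h2 := card_inter_Icc_split (S ∩ T) hpq
  have h3 := card_inter_Icc_split T hpq
  have h4 : ((S ∩ T) ∩ Finset.Ioc p q).card ≤ (T ∩ Finset.Ioc p q).card :=
    Finset.card_le_card (Finset.inter_subset_inter Finset.inter_subset_right Finset.Subset.rfl)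
  omega

lemma gmv_submodular (n : ℕ) (D : Finset (ℕ × ℕ)) (c : ℕ) (S T : Finset ℕ) :
    gmv D (S ∪ T) c n + gmv D (S ∩ T) c n ≤ gmv D S c n + gmv D T c n := by
  obtain ⟨p, hp, hpe⟩ := Finset.exists_mem_eq_inf' (⟨0, by simp⟩ : (Finset.range (n+1)).Nonempty)
    (fun p => scv S p + bbv D c p n)
  obtain ⟨q, hq, hqe⟩ := Finset.exists_mem_eq_inf' (⟨0, by simp⟩ : (Finset.range (n+1)).Nonempty)
    (fun p => scv T p + bbv D c p n)
  simp only [Finset.mem_range] at hp hq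
  rcases le_total p q with hpq | hpq
  · have b1 : gmv D (S ∪ T) c n ≤ scv (S ∪ T) p + bbv D c p n := gmv_le n D _ c (by omega)
    have b2 : gmv D (S ∩ T) c n ≤ scv (S ∩ T) q + bbv D c q n := gmv_le n D _ c (by omega)
    have key := key_card_ineq S T hpq
    unfold scv at *
    have hS : gmv D S c n = (S ∩ Finset.Icc 1 p).card + bbv D c p n := hpe
    have hT : gmv D T c n = (T ∩ Finset.Icc 1 q).card + bbv D c q n := hqe
    omega
  · have b1 : gmv D (S ∪ T) c n ≤ scv (S ∪ T) q + bbv D c q n := gmv_le n D _ c (by omega)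
    have b2 : gmv D (S ∩ T) c n ≤ scv (S ∩ T) p + bbv D c p n := gmv_le n D _ c (by omega)
    have key := key_card_ineq T S hpq
    unfold scv at *
    have hS : gmv D S c n = (S ∩ Finset.Icc 1 p).card + bbv D c p n := hpe
    have hT : gmv D T c n = (T ∩ Finset.Icc 1 q).card + bbv D c q n := hqe
    rw [Finset.union_comm T S, Finset.inter_comm T S] at key
    omega


set_option maxHeartbeats 1000000 in
theorem decompose :
    ∀ (N : Finset ℕ) (f g : Finset ℕ → ℤ) (x : ℕ → ℤ),
    f ∅ = 0 → g ∅ = 0 →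
    (∀ S ⊆ N, ∀ T ⊆ N, f (S ∪ T) + f (S ∩ T) ≤ f S + f T) →
    (∀ S ⊆ N, ∀ T ⊆ N, g (S ∪ T) + g (S ∩ T) ≤ g S + g T) →
    (∀ S T, S ⊆ T → T ⊆ N → f S ≤ f T) →
    (∀ S T, S ⊆ T → T ⊆ N → g S ≤ g T) →
    (∀ i ∈ N, 0 ≤ x i) →
    (∀ S ⊆ N, (∑ i ∈ S, x i) ≤ f S + g S) →
    ∃ y : ℕ → ℤ, (∀ i ∈ N, 0 ≤ y i ∧ y i ≤ x i) ∧
      (∀ S ⊆ N, (∑ i ∈ S, y i) ≤ f S) ∧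
      (∀ S ⊆ N, (∑ i ∈ S, (x i - y i)) ≤ g S) := by
  intro N
  induction N using Finset.strongInduction with
  | _ N ih =>
  intro f g x hf0 hg0 hfsub hgsub hfmono hgmono hx0 hxle
  rcases N.eq_empty_or_nonempty with rfl | hne
  · refine ⟨fun _ => 0, by simp, ?_, ?_⟩
    · intro S hS
      rw [Finset.subset_empty.mp hS]
      simp [hf0]
    · intro S hS
      rw [Finset.subset_empty.mp hS]
      simp [hg0]
  obtain ⟨n₀, hn₀⟩ := hne
  set N' := N.erase n₀ with hN'def
  have hssub : N' ⊂ N := Finset.erase_ssubset hn₀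
  have hN'N : N' ⊆ N := Finset.erase_subset _ _
  have hn₀N' : n₀ ∉ N' := Finset.notMem_erase _ _
  have hinsN : ∀ A ⊆ N', insert n₀ A ⊆ N := fun A hA =>
    Finset.insert_subset hn₀ (hA.trans hN'N)
  have hnotmem : ∀ A ⊆ N', n₀ ∉ A := fun A hA h => hn₀N' (hA h)
  -- the candidate lower bounds
  set GG : Finset ℕ → ℤ :=
    fun A => (∑ i ∈ insert n₀ A, x i) - g (insert n₀ A) - f A with hGGdef
  set FF : Finset ℕ → ℤ :=
    fun B => f (insert n₀ B) + g B - (∑ i ∈ B, x i) with hFFdef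
  have himgne : (N'.powerset.image GG).Nonempty :=
    Finset.Nonempty.image ⟨∅, Finset.empty_mem_powerset _⟩ _
  set s : ℤ := max 0 ((N'.powerset.image GG).max' himgne) with hsdef
  have hGG_le_s : ∀ A ⊆ N', GG A ≤ s := fun A hA =>
    le_trans (Finset.le_max' _ _ (Finset.mem_image_of_mem GG
      (Finset.mem_powerset.mpr hA))) (le_max_right _ _)
  have hs0 : 0 ≤ s := le_max_left _ _
  have hs_cases : s = 0 ∨ ∃ A ⊆ N', s = GG A := by
    rcases le_total ((N'.powerset.image GG).max' himgne) 0 with h | h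
    · left; rw [hsdef, max_eq_left h]
    · right
      obtain ⟨A, hA, hAe⟩ := Finset.mem_image.mp ((N'.powerset.image GG).max'_mem himgne)
      exact ⟨A, Finset.mem_powerset.mp hA, by rw [hsdef, max_eq_right h, ← hAe]⟩
  -- pairwise inequality GG A ≤ FF B
  have hpair : ∀ A ⊆ N', ∀ B ⊆ N', GG A ≤ FF B := by
    intro A hA B hB
    have hnA := hnotmem A hA
    have hnB := hnotmem B hB
    have hU : insert n₀ A ∪ B = insert n₀ (A ∪ B) := by
      ext a; simp only [Finset.mem_union, Finset.mem_insert]; tauto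
    have hI : insert n₀ A ∩ B = A ∩ B := by
      ext a
      simp only [Finset.mem_inter, Finset.mem_insert]
      constructor
      · rintro ⟨rfl | h, hb⟩
        · exact absurd hb hnB
        · exact ⟨h, hb⟩
      · tauto
    have hsum : (∑ i ∈ insert n₀ A, x i) + (∑ i ∈ B, x i)
        = (∑ i ∈ insert n₀ (A ∪ B), x i) + (∑ i ∈ A ∩ B, x i) := by
      rw [← hU, ← hI]
      exact (Finset.sum_union_inter).symm
    have hAB' : A ∪ B ⊆ N' := Finset.union_subset hA hB
    have hx1 := hxle (insert n₀ (A ∪ B)) (hinsN _ hAB')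
    have hx2 := hxle (A ∩ B) ((Finset.inter_subset_left).trans (hA.trans hN'N))
    have hfs := hfsub A (hA.trans hN'N) (insert n₀ B) (hinsN _ hB)
    have hgs := hgsub (insert n₀ A) (hinsN _ hA) B (hB.trans hN'N)
    have e1 : A ∪ insert n₀ B = insert n₀ (A ∪ B) := by
      ext a; simp only [Finset.mem_union, Finset.mem_insert]; tauto
    have e2 : A ∩ insert n₀ B = A ∩ B := by
      ext a
      simp only [Finset.mem_inter, Finset.mem_insert]
      constructor
      · rintro ⟨ha, rfl | h⟩
        · exact absurd ha hnA
        · exact ⟨ha, h⟩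
      · tauto
    have e3 : insert n₀ A ∪ B = insert n₀ (A ∪ B) := hU
    have e4 : insert n₀ A ∩ B = A ∩ B := hI
    rw [e1, e2] at hfs
    rw [e3, e4] at hgs
    simp only [hGGdef, hFFdef]
    linarith
  have hFF0 : ∀ B ⊆ N', 0 ≤ FF B := by
    intro B hB
    have h1 := hxle B (hB.trans hN'N)
    have h2 := hfmono B (insert n₀ B) (Finset.subset_insert _ _) (hinsN _ hB)
    simp only [hFFdef]
    linarith
  have hs_le_FF : ∀ B ⊆ N', s ≤ FF B := by
    intro B hB
    rcases hs_cases with h | ⟨A, hA, hAe⟩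
    · rw [h]; exact hFF0 B hB
    · rw [hAe]; exact hpair A hA B hB
  have hs_le_x : s ≤ x n₀ := by
    rcases hs_cases with h | ⟨A, hA, hAe⟩
    · rw [h]; exact hx0 n₀ hn₀
    · rw [hAe]
      have hnA := hnotmem A hA
      have h1 : (∑ i ∈ insert n₀ A, x i) = x n₀ + ∑ i ∈ A, x i :=
        Finset.sum_insert hnA
      have h2 := hxle A (hA.trans hN'N)
      have h3 := hgmono A (insert n₀ A) (Finset.subset_insert _ _) (hinsN _ hA)
      simp only [hGGdef]
      linarith
  have hs_le_f : s ≤ f {n₀} := by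
    have := hs_le_FF ∅ (Finset.empty_subset _)
    simp only [hFFdef, Finset.sum_empty, hg0] at this
    have he : insert n₀ (∅ : Finset ℕ) = {n₀} := rfl
    rw [he] at this
    linarith
  clear_value s
  clear hsdef himgne
  set t : ℤ := x n₀ - s with htdef
  have ht0 : 0 ≤ t := by simp only [htdef]; linarith
  have ht_le_g : t ≤ g {n₀} := by
    have := hGG_le_s ∅ (Finset.empty_subset _)
    have he : insert n₀ (∅ : Finset ℕ) = {n₀} := rfl
    simp only [hGGdef, he, hf0, Finset.sum_singleton] at this
    simp only [htdef]
    linarith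
  clear_value t
  set f' : Finset ℕ → ℤ := fun A => min (f A) (f (insert n₀ A) - s) with hf'def
  set g' : Finset ℕ → ℤ := fun A => min (g A) (g (insert n₀ A) - t) with hg'def
  have hf'0 : f' ∅ = 0 := by
    have he : insert n₀ (∅ : Finset ℕ) = {n₀} := rfl
    simp only [hf'def, hf0, he]
    omega
  have hg'0 : g' ∅ = 0 := by
    have he : insert n₀ (∅ : Finset ℕ) = {n₀} := rfl
    simp only [hg'def, hg0, he]
    omega
  -- generic contraction submodularity
  have hcontr : ∀ (h : Finset ℕ → ℤ) (v : ℤ),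
      (∀ S ⊆ N, ∀ T ⊆ N, h (S ∪ T) + h (S ∩ T) ≤ h S + h T) →
      ∀ S ⊆ N', ∀ T ⊆ N',
        min (h (S ∪ T)) (h (insert n₀ (S ∪ T)) - v)
          + min (h (S ∩ T)) (h (insert n₀ (S ∩ T)) - v)
        ≤ min (h S) (h (insert n₀ S) - v) + min (h T) (h (insert n₀ T) - v) := by
    intro h v hsub S hS T hT
    have hnS := hnotmem S hS
    have hnT := hnotmem T hT
    have eU1 : S ∪ insert n₀ T = insert n₀ (S ∪ T) := by
      ext a; simp only [Finset.mem_union, Finset.mem_insert]; tauto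
    have eI1 : S ∩ insert n₀ T = S ∩ T := by
      ext a
      simp only [Finset.mem_inter, Finset.mem_insert]
      constructor
      · rintro ⟨ha, rfl | hx⟩
        · exact absurd ha hnS
        · exact ⟨ha, hx⟩
      · tauto
    have eU2 : insert n₀ S ∪ T = insert n₀ (S ∪ T) := by
      ext a; simp only [Finset.mem_union, Finset.mem_insert]; tauto
    have eI2 : insert n₀ S ∩ T = S ∩ T := by
      ext a
      simp only [Finset.mem_inter, Finset.mem_insert]
      constructor
      · rintro ⟨rfl | hx, ht'⟩
        · exact absurd ht' hnT
        · exact ⟨hx, ht'⟩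
      · tauto
    have eU3 : insert n₀ S ∪ insert n₀ T = insert n₀ (S ∪ T) := by
      ext a; simp only [Finset.mem_union, Finset.mem_insert]; tauto
    have eI3 : insert n₀ S ∩ insert n₀ T = insert n₀ (S ∩ T) := by
      ext a; simp only [Finset.mem_inter, Finset.mem_insert]; tauto
    have c1 := hsub S (hS.trans hN'N) T (hT.trans hN'N)
    have c2 := hsub S (hS.trans hN'N) (insert n₀ T) (hinsN _ hT)
    have c3 := hsub (insert n₀ S) (hinsN _ hS) T (hT.trans hN'N)
    have c4 := hsub (insert n₀ S) (hinsN _ hS) (insert n₀ T) (hinsN _ hT)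
    rw [eU1, eI1] at c2
    rw [eU2, eI2] at c3
    rw [eU3, eI3] at c4
    have bU1 := min_le_left (h (S ∪ T)) (h (insert n₀ (S ∪ T)) - v)
    have bU2 := min_le_right (h (S ∪ T)) (h (insert n₀ (S ∪ T)) - v)
    have bI1 := min_le_left (h (S ∩ T)) (h (insert n₀ (S ∩ T)) - v)
    have bI2 := min_le_right (h (S ∩ T)) (h (insert n₀ (S ∩ T)) - v)
    rcases min_cases (h S) (h (insert n₀ S) - v) with ⟨e5, _⟩ | ⟨e5, _⟩ <;>
      rcases min_cases (h T) (h (insert n₀ T) - v) with ⟨e6, _⟩ | ⟨e6, _⟩ <;>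
      rw [e5, e6] <;> linarith
  have hf'sub : ∀ S ⊆ N', ∀ T ⊆ N', f' (S ∪ T) + f' (S ∩ T) ≤ f' S + f' T :=
    fun S hS T hT => hcontr f s hfsub S hS T hT
  have hg'sub : ∀ S ⊆ N', ∀ T ⊆ N', g' (S ∪ T) + g' (S ∩ T) ≤ g' S + g' T :=
    fun S hS T hT => hcontr g t hgsub S hS T hT
  have hf'mono : ∀ S T, S ⊆ T → T ⊆ N' → f' S ≤ f' T := by
    intro S T hST hT
    have h1 : f S ≤ f T := hfmono S T hST (hT.trans hN'N)
    have h2 : f (insert n₀ S) ≤ f (insert n₀ T) :=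
      hfmono (insert n₀ S) (insert n₀ T) (Finset.insert_subset_insert _ hST) (hinsN _ hT)
    have h3 : f (insert n₀ S) - s ≤ f (insert n₀ T) - s := by linarith
    exact min_le_min h1 h3
  have hg'mono : ∀ S T, S ⊆ T → T ⊆ N' → g' S ≤ g' T := by
    intro S T hST hT
    have h1 : g S ≤ g T := hgmono S T hST (hT.trans hN'N)
    have h2 : g (insert n₀ S) ≤ g (insert n₀ T) :=
      hgmono (insert n₀ S) (insert n₀ T) (Finset.insert_subset_insert _ hST) (hinsN _ hT)
    have h3 : g (insert n₀ S) - t ≤ g (insert n₀ T) - t := by linarith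
    exact min_le_min h1 h3
  have hxle' : ∀ S ⊆ N', (∑ i ∈ S, x i) ≤ f' S + g' S := by
    intro S hS
    have hnS := hnotmem S hS
    have hsum : (∑ i ∈ insert n₀ S, x i) = x n₀ + ∑ i ∈ S, x i :=
      Finset.sum_insert hnS
    have F1 := hxle S (hS.trans hN'N)
    have F2 : (∑ i ∈ S, x i) ≤ f S + (g (insert n₀ S) - t) := by
      have := hGG_le_s S hS
      simp only [hGGdef] at this
      simp only [htdef]
      linarith
    have F3 : (∑ i ∈ S, x i) ≤ (f (insert n₀ S) - s) + g S := by
      have := hs_le_FF S hS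
      simp only [hFFdef] at this
      linarith
    have F4 : (∑ i ∈ S, x i) ≤ (f (insert n₀ S) - s) + (g (insert n₀ S) - t) := by
      have := hxle (insert n₀ S) (hinsN _ hS)
      simp only [htdef]
      linarith
    rcases min_cases (f S) (f (insert n₀ S) - s) with ⟨e5, _⟩ | ⟨e5, _⟩ <;>
      rcases min_cases (g S) (g (insert n₀ S) - t) with ⟨e6, _⟩ | ⟨e6, _⟩ <;>
      simp only [hf'def, hg'def, e5, e6] <;> linarith
  obtain ⟨y', hy'b, hy'f, hy'g⟩ := ih N' hssub f' g' x hf'0 hg'0 hf'sub hg'sub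
    hf'mono hg'mono (fun i hi => hx0 i (hN'N hi)) hxle'
  refine ⟨fun i => if i = n₀ then s else y' i, ?_, ?_, ?_⟩
  · intro i hi
    by_cases h : i = n₀
    · simp only [h, if_true]
      exact ⟨hs0, hs_le_x⟩
    · simp only [h, if_false]
      exact hy'b i (Finset.mem_erase.mpr ⟨h, hi⟩)
  · intro S hS
    by_cases hmem : n₀ ∈ S
    · set S' := S.erase n₀ with hS'def
      have hS'N' : S' ⊆ N' := fun a ha => by
        have := Finset.mem_erase.mp ha
        exact Finset.mem_erase.mpr ⟨this.1, hS this.2⟩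
      have hSins : S = insert n₀ S' := (Finset.insert_erase hmem).symm
      have hn₀S' : n₀ ∉ S' := Finset.notMem_erase _ _
      have hsplit : (∑ i ∈ S, (if i = n₀ then s else y' i))
          = s + ∑ i ∈ S', y' i := by
        rw [hSins, Finset.sum_insert hn₀S', if_pos rfl]
        congr 1
        exact Finset.sum_congr rfl fun i hi => if_neg (by rintro rfl; exact hn₀S' hi)
      rw [hsplit]
      have h1 : (∑ i ∈ S', y' i) ≤ f' S' := hy'f S' hS'N'
      have h2 : f' S' ≤ f (insert n₀ S') - s := min_le_right _ _
      rw [hSins]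
      linarith
    · have hSN' : S ⊆ N' := fun a ha =>
        Finset.mem_erase.mpr ⟨fun h => hmem (h ▸ ha), hS ha⟩
      have hsplit : (∑ i ∈ S, (if i = n₀ then s else y' i)) = ∑ i ∈ S, y' i :=
        Finset.sum_congr rfl fun i hi => if_neg (by rintro rfl; exact hmem hi)
      rw [hsplit]
      exact le_trans (hy'f S hSN') (min_le_left _ _)
  · intro S hS
    by_cases hmem : n₀ ∈ S
    · set S' := S.erase n₀ with hS'def
      have hS'N' : S' ⊆ N' := fun a ha => by
        have := Finset.mem_erase.mp ha
        exact Finset.mem_erase.mpr ⟨this.1, hS this.2⟩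
      have hSins : S = insert n₀ S' := (Finset.insert_erase hmem).symm
      have hn₀S' : n₀ ∉ S' := Finset.notMem_erase _ _
      have hsplit : (∑ i ∈ S, (x i - (if i = n₀ then s else y' i)))
          = (x n₀ - s) + ∑ i ∈ S', (x i - y' i) := by
        rw [hSins, Finset.sum_insert hn₀S', if_pos rfl]
        congr 1
        exact Finset.sum_congr rfl fun i hi => by
          rw [if_neg (show ¬ i = n₀ by rintro rfl; exact hn₀S' hi)]
      rw [hsplit]
      have h1 : (∑ i ∈ S', (x i - y' i)) ≤ g' S' := hy'g S' hS'N'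
      have h2 : g' S' ≤ g (insert n₀ S') - t := min_le_right _ _
      rw [hSins]
      simp only [htdef] at h2 ⊢
      linarith
    · have hSN' : S ⊆ N' := fun a ha =>
        Finset.mem_erase.mpr ⟨fun h => hmem (h ▸ ha), hS ha⟩
      have hsplit : (∑ i ∈ S, (x i - (if i = n₀ then s else y' i)))
          = ∑ i ∈ S, (x i - y' i) :=
        Finset.sum_congr rfl fun i hi => by
          rw [if_neg (show ¬ i = n₀ by rintro rfl; exact hmem hi)]
      rw [hsplit]
      exact le_trans (hy'g S hSN') (min_le_left _ _)


theorem decompose_family (N : Finset ℕ) (G : ℕ → Finset ℕ → ℤ) :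
    ∀ (C : Finset ℕ) (x : ℕ → ℤ),
    (∀ c, G c ∅ = 0) →
    (∀ c, ∀ S ⊆ N, ∀ T ⊆ N, G c (S ∪ T) + G c (S ∩ T) ≤ G c S + G c T) →
    (∀ c, ∀ S T, S ⊆ T → T ⊆ N → G c S ≤ G c T) →
    (∀ i ∈ N, 0 ≤ x i) →
    (∀ S ⊆ N, (∑ i ∈ S, x i) ≤ ∑ c ∈ C, G c S) →
    ∃ y : ℕ → ℕ → ℤ, (∀ c ∈ C, ∀ i ∈ N, 0 ≤ y c i) ∧
      (∀ c ∈ C, ∀ S ⊆ N, (∑ i ∈ S, y c i) ≤ G c S) ∧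
      (∀ i ∈ N, (∑ c ∈ C, y c i) = x i) := by
  intro C
  induction C using Finset.induction_on with
  | empty =>
    intro x h0 hsub hmono hx0 hxle
    refine ⟨fun _ _ => 0, by simp, by simp, ?_⟩
    intro i hi
    have h1 := hxle {i} (Finset.singleton_subset_iff.mpr hi)
    simp only [Finset.sum_singleton, Finset.sum_empty] at h1
    have h2 := hx0 i hi
    simp only [Finset.sum_empty]
    omega
  | @insert c₀ C hc₀ ihC =>
    intro x h0 hsub hmono hx0 hxle
    have hgsum0 : (fun S => ∑ c ∈ C, G c S) ∅ = 0 := by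
      simp only []
      rw [Finset.sum_congr rfl fun c _ => h0 c]
      simp
    have hgsumsub : ∀ S ⊆ N, ∀ T ⊆ N,
        (∑ c ∈ C, G c (S ∪ T)) + (∑ c ∈ C, G c (S ∩ T))
          ≤ (∑ c ∈ C, G c S) + (∑ c ∈ C, G c T) := by
      intro S hS T hT
      rw [← Finset.sum_add_distrib, ← Finset.sum_add_distrib]
      exact Finset.sum_le_sum fun c _ => hsub c S hS T hT
    have hgsummono : ∀ S T, S ⊆ T → T ⊆ N →
        (∑ c ∈ C, G c S) ≤ (∑ c ∈ C, G c T) := by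
      intro S T hST hT
      exact Finset.sum_le_sum fun c _ => hmono c S T hST hT
    have hxle' : ∀ S ⊆ N, (∑ i ∈ S, x i) ≤ G c₀ S + ∑ c ∈ C, G c S := by
      intro S hS
      have := hxle S hS
      rwa [Finset.sum_insert hc₀] at this
    obtain ⟨y₀, hy₀b, hy₀f, hy₀g⟩ := decompose N (G c₀) (fun S => ∑ c ∈ C, G c S) x
      (h0 c₀) hgsum0 (fun S hS T hT => hsub c₀ S hS T hT) hgsumsub
      (fun S T h1 h2 => hmono c₀ S T h1 h2) hgsummono hx0 hxle'
    obtain ⟨yr, hyrb, hyrf, hyrsum⟩ := ihC (fun i => x i - y₀ i) h0 hsub hmono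
      (fun i hi => by have := hy₀b i hi; show (0:ℤ) ≤ x i - y₀ i; omega) hy₀g
    refine ⟨fun c => if c = c₀ then y₀ else yr c, ?_, ?_, ?_⟩
    · intro c hc i hi
      rcases Finset.mem_insert.mp hc with rfl | hcC
      · simp only [if_pos rfl]
        exact (hy₀b i hi).1
      · have hne : c ≠ c₀ := by rintro rfl; exact hc₀ hcC
        simp only [hne, if_false]
        exact hyrb c hcC i hi
    · intro c hc S hS
      rcases Finset.mem_insert.mp hc with rfl | hcC
      · simp only [if_pos rfl]
        exact hy₀f S hS
      · have hne : c ≠ c₀ := by rintro rfl; exact hc₀ hcC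
        simp only [hne, if_false]
        exact hyrf c hcC S hS
    · intro i hi
      rw [Finset.sum_insert hc₀]
      simp only [if_pos rfl, if_true, eq_self_iff_true]
      have h1 : (∑ c ∈ C, (if c = c₀ then y₀ else yr c) i) = ∑ c ∈ C, yr c i :=
        Finset.sum_congr rfl fun c hc => by
          have hne : c ≠ c₀ := by rintro rfl; exact hc₀ hc
          simp only [hne, if_false]
      rw [h1, hyrsum i hi]
      omega

lemma iso_le_iso (A B : Finset ℕ) (k : ℕ) (hA : A.card = k) (hB : B.card = k)
    (hdom : ∀ p : ℕ, (A.filter fun a => p < a).card ≤ (B.filter fun b => p < b).card) :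
    ∀ j : Fin k, (A.orderIsoOfFin hA j : ℕ) ≤ (B.orderIsoOfFin hB j : ℕ) := by
  intro j
  by_contra hcon
  push_neg at hcon
  set a : ℕ := (A.orderIsoOfFin hA j : ℕ) with hadef
  set b : ℕ := (B.orderIsoOfFin hB j : ℕ) with hbdef
  -- k - j ≤ |A ∩ (b, ∞)|
  have h1 : (Finset.Ici j).image (fun j' => (A.orderIsoOfFin hA j' : ℕ))
      ⊆ A.filter fun x => b < x := by
    intro x hx
    obtain ⟨j', hj', rfl⟩ := Finset.mem_image.mp hx
    refine Finset.mem_filter.mpr ⟨(A.orderIsoOfFin hA j').2, ?_⟩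
    have : a ≤ (A.orderIsoOfFin hA j' : ℕ) := by
      have := (A.orderIsoOfFin hA).monotone (Finset.mem_Ici.mp hj')
      exact this
    omega
  have hinj : Function.Injective (fun j' : Fin k => (A.orderIsoOfFin hA j' : ℕ)) := by
    intro u v huv
    have : (A.orderIsoOfFin hA u) = (A.orderIsoOfFin hA v) := Subtype.ext huv
    exact (A.orderIsoOfFin hA).injective this
  have hcard1 : k - (j : ℕ) ≤ (A.filter fun x => b < x).card := by
    have := Finset.card_le_card h1
    rwa [Finset.card_image_of_injective _ hinj, Fin.card_Ici] at this
  -- |B ∩ (b, ∞)| ≤ k - 1 - j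
  have h2 : (B.filter fun x => b < x)
      ⊆ (Finset.Ioi j).image (fun j' => (B.orderIsoOfFin hB j' : ℕ)) := by
    intro x hx
    obtain ⟨hxB, hxb⟩ := Finset.mem_filter.mp hx
    set j' := (B.orderIsoOfFin hB).symm ⟨x, hxB⟩ with hj'def
    have hxj' : (B.orderIsoOfFin hB j' : ℕ) = x := by
      rw [hj'def]
      simp
    refine Finset.mem_image.mpr ⟨j', ?_, hxj'⟩
    rw [Finset.mem_Ioi]
    by_contra hle
    push_neg at hle
    have : (B.orderIsoOfFin hB j' : ℕ) ≤ b := (B.orderIsoOfFin hB).monotone hle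
    omega
  have hcard2 : (B.filter fun x => b < x).card ≤ k - 1 - (j : ℕ) := by
    have := Finset.card_le_card h2
    refine le_trans this ?_
    refine le_trans (Finset.card_image_le) ?_
    rw [Fin.card_Ioi]
  have hj := j.2
  have := hdom b
  omega

lemma exists_fill (A B : Finset ℕ) (hc : A.card = B.card)
    (hdom : ∀ p : ℕ, (A.filter fun a => p < a).card ≤ (B.filter fun b => p < b).card) :
    ∃ e : ℕ → ℕ, (∀ r ∈ B, e r ∈ A ∧ e r ≤ r) ∧
      (∀ r ∈ B, ∀ r' ∈ B, r ≠ r' → e r ≠ e r') ∧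
      (∀ a ∈ A, ∃ r ∈ B, e r = a) := by
  classical
  set k := B.card with hkdef
  have hA : A.card = k := hc
  have hB : B.card = k := rfl
  refine ⟨fun r => if h : r ∈ B then
      (A.orderIsoOfFin hA ((B.orderIsoOfFin hB).symm ⟨r, h⟩) : ℕ) else 0, ?_, ?_, ?_⟩
  · intro r hr
    simp only [dif_pos hr]
    constructor
    · exact (A.orderIsoOfFin hA _).2
    · have := iso_le_iso A B k hA hB hdom ((B.orderIsoOfFin hB).symm ⟨r, hr⟩)
      have heq : (B.orderIsoOfFin hB ((B.orderIsoOfFin hB).symm ⟨r, hr⟩) : ℕ) = r := by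
        simp
      omega
  · intro r hr r' hr' hne
    simp only [dif_pos hr, dif_pos hr']
    intro heq
    have h1 : (A.orderIsoOfFin hA ((B.orderIsoOfFin hB).symm ⟨r, hr⟩))
        = (A.orderIsoOfFin hA ((B.orderIsoOfFin hB).symm ⟨r', hr'⟩)) := Subtype.ext heq
    have h2 := (A.orderIsoOfFin hA).injective h1
    have h3 := (B.orderIsoOfFin hB).symm.injective.eq_iff.mp h2
    exact hne (congrArg Subtype.val h3)
  · intro a ha
    set j := (A.orderIsoOfFin hA).symm ⟨a, ha⟩ with hjdef
    refine ⟨(B.orderIsoOfFin hB j : ℕ), (B.orderIsoOfFin hB j).2, ?_⟩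
    have hmem : ((B.orderIsoOfFin hB j : ℕ)) ∈ B := (B.orderIsoOfFin hB j).2
    simp only [dif_pos hmem]
    have : (B.orderIsoOfFin hB).symm ⟨(B.orderIsoOfFin hB j : ℕ), hmem⟩ = j := by
      apply (B.orderIsoOfFin hB).injective
      simp
      exact Subtype.ext rfl
    rw [this, hjdef]
    simp


lemma card_col (n : ℕ) (D : Finset (ℕ × ℕ)) (hD : D ⊆ grid n) (c : ℕ)
    (Q : ℕ × ℕ → Prop) [DecidablePred Q] :
    (D.filter fun b => Q b ∧ b.2 = c).card
      = ((Finset.Icc 1 n).filter fun r => (r, c) ∈ D ∧ Q (r, c)).card := by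
  refine Finset.card_bij' (fun b _ => b.1) (fun r _ => (r, c)) ?_ ?_ ?_ ?_
  · intro b hb
    have h := Finset.mem_filter.mp hb
    have hbc : b.2 = c := h.2.2
    have hb1 : b.1 ∈ Finset.Icc 1 n := (Finset.mem_product.mp (hD h.1)).1
    have hbeq : ((b.1, c) : ℕ × ℕ) = b := by
      rw [← hbc]
    refine Finset.mem_filter.mpr ⟨hb1, ?_, ?_⟩
    · rw [hbeq]; exact h.1
    · rw [hbeq]; exact h.2.1
  · intro r hr
    have h := Finset.mem_filter.mp hr
    exact Finset.mem_filter.mpr ⟨h.2.1, h.2.2, rfl⟩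
  · intro b hb
    have hbc : b.2 = c := (Finset.mem_filter.mp hb).2.2
    show (b.1, c) = b
    rw [← hbc]
  · intro r hr
    rfl

lemma theta_eq_sum_gmv (n : ℕ) (D : Finset (ℕ × ℕ)) (S : Finset ℕ) :
    theta n D S = ∑ c ∈ Finset.Icc 1 n, gmv D S c n :=
  Finset.sum_congr rfl fun c _ => thetaCol_eq_gmv n D S c

lemma perfect_to_schubitope (n : ℕ) (D : Finset (ℕ × ℕ)) (hD : D ⊆ grid n)
    (α : ℕ → ℕ) (τ : ℕ × ℕ → Option ℕ) (hperf : IsPerfect n D τ α) :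
    InSchubitope n D α := by
  classical
  obtain ⟨⟨⟨htabn, htabm⟩, hflag, hcol, hcont⟩, hfull⟩ := hperf
  have hlab : ∀ b ∈ D, ∃ l, τ b = some l ∧ l ∈ Finset.Icc 1 n ∧ l ≤ b.1 := by
    intro b hb
    rcases h : τ b with _ | l
    · exact absurd h (hfull b hb)
    · exact ⟨l, rfl, htabm b hb l h, hflag b hb l h⟩
  have hfilt_eq : ∀ i, D.filter (fun b => (τ b).getD 0 = i)
      = D.filter (fun b => τ b = some i) := by
    intro i
    apply Finset.filter_congr
    intro b hb
    obtain ⟨l, hl, _, _⟩ := hlab b hb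
    rw [hl]
    simp
  constructor
  · -- total count
    have hfib : D.card = ∑ i ∈ Finset.Icc 1 n,
        (D.filter fun b => (τ b).getD 0 = i).card := by
      refine Finset.card_eq_sum_card_fiberwise fun b hb => ?_
      obtain ⟨l, hl, hlN, _⟩ := hlab b hb
      rw [hl]
      exact hlN
    rw [hfib]
    refine Finset.sum_congr rfl fun i hi => ?_
    rw [hfilt_eq i]
    exact (hcont i hi).symm
  · -- inequalities
    intro S hS
    rw [theta_eq_sum_gmv]
    have h1 : (∑ i ∈ S, α i)
        = ∑ i ∈ S, (D.filter fun b => τ b = some i).card :=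
      Finset.sum_congr rfl fun i hi => (hcont i (hS hi)).symm
    rw [h1]
    have h2 : ∀ i, (D.filter fun b => τ b = some i).card
        = ∑ c ∈ Finset.Icc 1 n, (D.filter fun b => τ b = some i ∧ b.2 = c).card := by
      intro i
      have := Finset.card_eq_sum_card_fiberwise
        (f := fun b : ℕ × ℕ => b.2) (s := D.filter fun b => τ b = some i)
        (t := Finset.Icc 1 n)
        (fun b hb => (Finset.mem_product.mp (hD (Finset.mem_filter.mp hb).1)).2)
      rw [this]
      exact Finset.sum_congr rfl fun c _ => by rw [Finset.filter_filter]
    calc (∑ i ∈ S, (D.filter fun b => τ b = some i).card)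
        = ∑ i ∈ S, ∑ c ∈ Finset.Icc 1 n,
            (D.filter fun b => τ b = some i ∧ b.2 = c).card :=
          Finset.sum_congr rfl fun i _ => h2 i
      _ = ∑ c ∈ Finset.Icc 1 n, ∑ i ∈ S,
            (D.filter fun b => τ b = some i ∧ b.2 = c).card := Finset.sum_comm
      _ ≤ ∑ c ∈ Finset.Icc 1 n, gmv D S c n := ?_
    refine Finset.sum_le_sum fun c _ => ?_
    refine Finset.le_inf' _ _ fun p hp => ?_
    -- split S by ≤ p
    rw [← Finset.sum_filter_add_sum_filter_not S (fun i => i ≤ p)]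
    have hb1 : (∑ i ∈ S.filter (fun i => i ≤ p),
        (D.filter fun b => τ b = some i ∧ b.2 = c).card) ≤ scv S p := by
      have hle1 : ∀ i ∈ S.filter (fun i => i ≤ p),
          (D.filter fun b => τ b = some i ∧ b.2 = c).card ≤ 1 := by
        intro i _
        by_contra hgt
        push_neg at hgt
        obtain ⟨b, hb, b', hb', hne⟩ := Finset.one_lt_card.mp hgt
        have h := Finset.mem_filter.mp hb
        have h' := Finset.mem_filter.mp hb'
        exact hcol b h.1 b' h'.1 (h.2.2.trans h'.2.2.symm) hne i h.2.1 h'.2.1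
      calc (∑ i ∈ S.filter (fun i => i ≤ p),
            (D.filter fun b => τ b = some i ∧ b.2 = c).card)
          ≤ ∑ _i ∈ S.filter (fun i => i ≤ p), 1 := Finset.sum_le_sum hle1
        _ = (S.filter (fun i => i ≤ p)).card := by rw [Finset.sum_const, smul_eq_mul, mul_one]
        _ ≤ scv S p := by
            refine Finset.card_le_card fun i hi => ?_
            have h := Finset.mem_filter.mp hi
            have hiN := hS h.1
            rw [Finset.mem_Icc] at hiN
            exact Finset.mem_inter.mpr ⟨h.1, Finset.mem_Icc.mpr ⟨hiN.1, h.2⟩⟩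
    have hb2 : (∑ i ∈ S.filter (fun i => ¬ i ≤ p),
        (D.filter fun b => τ b = some i ∧ b.2 = c).card) ≤ bbv D c p n := by
      have hdisj : ∀ i₁ ∈ S.filter (fun i => ¬ i ≤ p), ∀ i₂ ∈ S.filter (fun i => ¬ i ≤ p),
          i₁ ≠ i₂ → Disjoint (D.filter fun b => τ b = some i₁ ∧ b.2 = c)
            (D.filter fun b => τ b = some i₂ ∧ b.2 = c) := by
        intro i₁ _ i₂ _ hne
        refine Finset.disjoint_left.mpr fun b hb hb' => ?_
        have h := (Finset.mem_filter.mp hb).2.1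
        have h' := (Finset.mem_filter.mp hb').2.1
        rw [h] at h'
        exact hne (Option.some_inj.mp h')
      rw [← Finset.card_biUnion hdisj]
      have hsub : ((S.filter (fun i => ¬ i ≤ p)).biUnion
          fun i => D.filter fun b => τ b = some i ∧ b.2 = c)
          ⊆ D.filter fun b => (p < b.1) ∧ b.2 = c := by
        intro b hb
        obtain ⟨i, hi, hbi⟩ := Finset.mem_biUnion.mp hb
        have h := Finset.mem_filter.mp hbi
        have hip : p < i := by
          have := (Finset.mem_filter.mp hi).2
          omega
        have hflagb := hflag b h.1 i h.2.1
        exact Finset.mem_filter.mpr ⟨h.1, by omega, h.2.2⟩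
      refine le_trans (Finset.card_le_card hsub) ?_
      rw [card_col n D hD c (fun b => p < b.1)]
      rfl
    omega


lemma gmv_full (n : ℕ) (D : Finset (ℕ × ℕ)) (c : ℕ) :
    gmv D (Finset.Icc 1 n) c n
      = ((Finset.Icc 1 n).filter fun r => (r, c) ∈ D).card := by
  have hb0 : bbv D c 0 n = ((Finset.Icc 1 n).filter fun r => (r, c) ∈ D).card := by
    unfold bbv
    congr 1
    apply Finset.filter_congr
    intro r hr
    rw [Finset.mem_Icc] at hr
    constructor
    · exact fun h => h.1
    · exact fun h => ⟨h, by omega⟩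
  apply le_antisymm
  · have := gmv_le n D (Finset.Icc 1 n) c (Nat.zero_le n)
    have hs0 : scv (Finset.Icc 1 n) 0 = 0 := by
      simp [scv]
    omega
  · refine Finset.le_inf' _ _ fun p hp => ?_
    -- |R| ≤ |N ∩ [1,p]| + |R ∩ (p,n]|
    have hsplit : ((Finset.Icc 1 n).filter fun r => (r, c) ∈ D)
        ⊆ ((Finset.Icc 1 n).filter fun r => (r, c) ∈ D ∧ r ≤ p)
          ∪ ((Finset.Icc 1 n).filter fun r => (r, c) ∈ D ∧ p < r) := by
      intro r hr
      have h := Finset.mem_filter.mp hr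
      rw [Finset.mem_union]
      rcases le_or_gt r p with h' | h'
      · exact Or.inl (Finset.mem_filter.mpr ⟨h.1, h.2, h'⟩)
      · exact Or.inr (Finset.mem_filter.mpr ⟨h.1, h.2, h'⟩)
    have h1 := Finset.card_le_card hsplit
    have h2 := Finset.card_union_le
      ((Finset.Icc 1 n).filter fun r => (r, c) ∈ D ∧ r ≤ p)
      ((Finset.Icc 1 n).filter fun r => (r, c) ∈ D ∧ p < r)
    have h3 : ((Finset.Icc 1 n).filter fun r => (r, c) ∈ D ∧ r ≤ p).card
        ≤ scv (Finset.Icc 1 n) p := by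
      refine Finset.card_le_card fun r hr => ?_
      have h := Finset.mem_filter.mp hr
      rw [Finset.mem_Icc] at h
      exact Finset.mem_inter.mpr ⟨by rw [Finset.mem_Icc]; omega,
        Finset.mem_Icc.mpr ⟨by omega, h.2.2⟩⟩
    have h4 : ((Finset.Icc 1 n).filter fun r => (r, c) ∈ D ∧ p < r).card
        = bbv D c p n := rfl
    omega

lemma schubitope_to_perfect (n : ℕ) (D : Finset (ℕ × ℕ)) (hD : D ⊆ grid n)
    (α : ℕ → ℕ) (hin : InSchubitope n D α) :
    ∃ τ : ℕ × ℕ → Option ℕ, IsPerfect n D τ α := by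
  classical
  obtain ⟨htot, hineq⟩ := hin
  set N := Finset.Icc 1 n with hNdef
  -- boxes of D lie in the grid
  have hDrow : ∀ b ∈ D, b.1 ∈ N := fun b hb => (Finset.mem_product.mp (hD hb)).1
  have hDcol : ∀ b ∈ D, b.2 ∈ N := fun b hb => (Finset.mem_product.mp (hD hb)).2
  set R : ℕ → Finset ℕ := fun c => N.filter (fun r => (r, c) ∈ D) with hRdef
  -- apply the family decomposition
  obtain ⟨y, hy0, hyle, hysum⟩ := decompose_family N
    (fun c S => (gmv D S c n : ℤ)) N (fun i => (α i : ℤ))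
    (fun c => by simp [gmv_empty])
    (fun c S _ T _ => by
      show (gmv D (S ∪ T) c n : ℤ) + (gmv D (S ∩ T) c n : ℤ)
        ≤ (gmv D S c n : ℤ) + (gmv D T c n : ℤ)
      exact_mod_cast gmv_submodular n D c S T)
    (fun c S T hST _ => by
      show (gmv D S c n : ℤ) ≤ (gmv D T c n : ℤ)
      exact_mod_cast gmv_mono n D c hST)
    (fun i _ => Int.natCast_nonneg _)
    (by
      intro S hS
      have h := hineq S hS
      rw [theta_eq_sum_gmv] at h
      exact_mod_cast h)
  have hy01 : ∀ c ∈ N, ∀ i ∈ N, y c i = 0 ∨ y c i = 1 := by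
    intro c hc i hi
    have h0 := hy0 c hc i hi
    have h1 : y c i ≤ (gmv D {i} c n : ℤ) := by
      have := hyle c hc {i} (Finset.singleton_subset_iff.mpr hi)
      simpa using this
    have h2 : (gmv D {i} c n : ℤ) ≤ 1 := by
      exact_mod_cast gmv_singleton_le_one n D c i
    omega
  set T : ℕ → Finset ℕ := fun c => N.filter (fun i => y c i = 1) with hTdef
  have hyT : ∀ c ∈ N, ∀ i ∈ N, (i ∈ T c ↔ y c i = 1) := by
    intro c hc i hi
    simp only [hTdef, Finset.mem_filter]
    exact ⟨fun h => h.2, fun h => ⟨hi, h⟩⟩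
  have hsum_card : ∀ c ∈ N, (∑ i ∈ N, y c i) = ((T c).card : ℤ) := by
    intro c hc
    rw [Finset.card_filter]
    push_cast
    refine Finset.sum_congr rfl fun i hi => ?_
    rcases hy01 c hc i hi with h | h <;> simp [h]
  have hGN : ∀ c, gmv D N c n = (R c).card := fun c => gmv_full n D c
  have hDcard : (D.card : ℤ) = ∑ c ∈ N, ((R c).card : ℤ) := by
    have hfib : D.card = ∑ c ∈ N, (D.filter fun b => b.2 = c).card :=
      Finset.card_eq_sum_card_fiberwise fun b hb => hDcol b hb
    have hcc : ∀ c, (D.filter fun b => b.2 = c).card = (R c).card := by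
      intro c
      have h1 : (D.filter fun b => b.2 = c)
          = D.filter fun b => (fun _ => True) b ∧ b.2 = c := by
        simp
      rw [h1, card_col n D hD c (fun _ => True)]
      congr 1
      simp [hRdef, hNdef]
    rw [hfib]
    push_cast
    exact Finset.sum_congr rfl fun c _ => by exact_mod_cast hcc c
  have hTR_le : ∀ c ∈ N, ((T c).card : ℤ) ≤ ((R c).card : ℤ) := by
    intro c hc
    rw [← hsum_card c hc, ← hGN c]
    exact hyle c hc N Finset.Subset.rfl
  have hcards : ∀ c ∈ N, (T c).card = (R c).card := by
    have htotal : (∑ c ∈ N, ((T c).card : ℤ)) = ∑ c ∈ N, ((R c).card : ℤ) := by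
      have h1 : (∑ c ∈ N, ((T c).card : ℤ)) = ∑ c ∈ N, ∑ i ∈ N, y c i :=
        (Finset.sum_congr rfl fun c hc => (hsum_card c hc).symm)
      have h2 : (∑ c ∈ N, ∑ i ∈ N, y c i) = ∑ i ∈ N, ∑ c ∈ N, y c i :=
        Finset.sum_comm
      have h3 : (∑ i ∈ N, ∑ c ∈ N, y c i) = ∑ i ∈ N, (α i : ℤ) :=
        Finset.sum_congr rfl fun i hi => hysum i hi
      have h4 : (∑ i ∈ N, (α i : ℤ)) = (D.card : ℤ) := by
        exact_mod_cast congrArg (Nat.cast : ℕ → ℤ) htot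
      rw [h1, h2, h3, h4, hDcard]
    intro c hc
    have hzero : (∑ c ∈ N, (((R c).card : ℤ) - ((T c).card : ℤ))) = 0 := by
      rw [Finset.sum_sub_distrib, htotal]
      ring
    have heach := (Finset.sum_eq_zero_iff_of_nonneg
      (fun c hc => by have := hTR_le c hc; omega)).mp hzero c hc
    omega
  have hTdom : ∀ c ∈ N, ∀ p : ℕ,
      ((T c).filter fun a => p < a).card ≤ ((R c).filter fun b => p < b).card := by
    intro c hc p
    by_cases hpn : p ≤ n
    case neg =>
      have hempty : (T c).filter (fun a => p < a) = ∅ := by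
        rw [Finset.filter_eq_empty_iff]
        intro a ha
        have haN := (Finset.mem_filter.mp ha).1
        rw [Finset.mem_Icc] at haN
        omega
      rw [hempty]
      simp
    set Sp := (T c).filter (fun a => p < a) with hSpdef
    have hSpN : Sp ⊆ N := fun a ha =>
      (Finset.mem_filter.mp ((Finset.mem_filter.mp ha).1)).1
    have h1 : (Sp.card : ℤ) = ∑ i ∈ Sp, y c i := by
      rw [Finset.card_eq_sum_ones]
      push_cast
      refine Finset.sum_congr rfl fun i hi => ?_
      have hiT := (Finset.mem_filter.mp hi).1
      have := (Finset.mem_filter.mp hiT).2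
      rw [this]
    have h2 : (∑ i ∈ Sp, y c i) ≤ (gmv D Sp c n : ℤ) := hyle c hc Sp hSpN
    have h3 : gmv D Sp c n ≤ scv Sp p + bbv D c p n := gmv_le n D Sp c hpn
    have h4 : scv Sp p = 0 := by
      rw [scv, Finset.card_eq_zero]
      ext a
      simp only [Finset.mem_inter, Finset.mem_Icc, Finset.notMem_empty, iff_false]
      rintro ⟨ha, h1', h2'⟩
      have := (Finset.mem_filter.mp ha).2
      omega
    have h5 : bbv D c p n = ((R c).filter fun b => p < b).card := by
      rw [bbv, hRdef]
      congr 1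
      rw [Finset.filter_filter]
    omega
  -- choose the fillings
  have hfillex : ∀ c, ∃ e : ℕ → ℕ, c ∈ N →
      ((∀ r ∈ R c, e r ∈ T c ∧ e r ≤ r) ∧
       (∀ r ∈ R c, ∀ r' ∈ R c, r ≠ r' → e r ≠ e r') ∧
       (∀ a ∈ T c, ∃ r ∈ R c, e r = a)) := by
    intro c
    by_cases hc : c ∈ N
    · obtain ⟨e, h1, h2, h3⟩ := exists_fill (T c) (R c) (hcards c hc) (hTdom c hc)
      exact ⟨e, fun _ => ⟨h1, h2, h3⟩⟩
    · exact ⟨fun _ => 0, fun h => absurd h hc⟩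
  choose e he using hfillex
  have hbR : ∀ b ∈ D, b.1 ∈ R b.2 := by
    intro b hb
    refine Finset.mem_filter.mpr ⟨hDrow b hb, ?_⟩
    rw [show ((b.1, b.2) : ℕ × ℕ) = b from rfl]
    exact hb
  set τ : ℕ × ℕ → Option ℕ := fun b => if b ∈ D then some (e b.2 b.1) else none
    with hτdef
  have hτin : ∀ b ∈ D, τ b = some (e b.2 b.1) := fun b hb => by
    rw [hτdef]
    simp [hb]
  have hτout : ∀ b, b ∉ D → τ b = none := fun b hb => by
    rw [hτdef]
    simp [hb]
  refine ⟨τ, ⟨⟨⟨hτout, ?_⟩, ?_, ?_, ?_⟩, fun b hb => by rw [hτin b hb]; simp⟩⟩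
  · -- labels in [1, n]
    intro b hb l hl
    rw [hτin b hb] at hl
    have hl' : e b.2 b.1 = l := Option.some_inj.mp hl
    have hmem := ((he b.2 (hDcol b hb)).1 b.1 (hbR b hb)).1
    rw [hl'] at hmem
    exact (Finset.mem_filter.mp hmem).1
  · -- flagged
    intro b hb l hl
    rw [hτin b hb] at hl
    have hl' : e b.2 b.1 = l := Option.some_inj.mp hl
    have := ((he b.2 (hDcol b hb)).1 b.1 (hbR b hb)).2
    omega
  · -- column injective
    intro b hb b' hb' hcc hne l hl hl'
    rw [hτin b hb] at hl
    rw [hτin b' hb'] at hl'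
    have h1 : e b.2 b.1 = l := Option.some_inj.mp hl
    have h2 : e b'.2 b'.1 = l := Option.some_inj.mp hl'
    have hrne : b.1 ≠ b'.1 := by
      intro h
      exact hne (Prod.ext h hcc)
    have hb'R : b'.1 ∈ R b.2 := by
      rw [hcc]
      exact hbR b' hb'
    have := (he b.2 (hDcol b hb)).2.1 b.1 (hbR b hb) b'.1 hb'R hrne
    rw [← hcc] at h2
    exact this (h1.trans h2.symm)
  · -- content
    intro i hi
    have hfe : (D.filter fun b => τ b = some i)
        = D.filter fun b => e b.2 b.1 = i := by
      apply Finset.filter_congr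
      intro b hb
      rw [hτin b hb]
      simp
    rw [hfe]
    have hfib : (D.filter fun b => e b.2 b.1 = i).card
        = ∑ c ∈ N, (D.filter fun b => (e b.2 b.1 = i) ∧ b.2 = c).card := by
      have h := Finset.card_eq_sum_card_fiberwise
        (f := fun b : ℕ × ℕ => b.2) (s := D.filter fun b => e b.2 b.1 = i) (t := N)
        (fun b hb => hDcol b (Finset.mem_filter.mp hb).1)
      rw [h]
      exact Finset.sum_congr rfl fun c _ => by rw [Finset.filter_filter]
    rw [hfib]
    have hcol_cnt : ∀ c ∈ N, (D.filter fun b => (e b.2 b.1 = i) ∧ b.2 = c).card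
        = if i ∈ T c then 1 else 0 := by
      intro c hc
      rw [card_col n D hD c (fun b => e b.2 b.1 = i)]
      have heq : ((Finset.Icc 1 n).filter fun r => (r, c) ∈ D ∧ e c r = i)
          = (R c).filter fun r => e c r = i := by
        rw [hRdef]
        rw [Finset.filter_filter]
      rw [heq]
      by_cases hiT : i ∈ T c
      · obtain ⟨r₀, hr₀, hre⟩ := (he c hc).2.2 i hiT
        rw [if_pos hiT]
        have : (R c).filter (fun r => e c r = i) = {r₀} := by
          ext r
          simp only [Finset.mem_filter, Finset.mem_singleton]
          constructor
          · rintro ⟨hrR, hrei⟩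
            by_contra hne
            exact (he c hc).2.1 r hrR r₀ hr₀ hne (hrei.trans hre.symm)
          · rintro rfl
            exact ⟨hr₀, hre⟩
        rw [this, Finset.card_singleton]
      · rw [if_neg hiT]
        rw [Finset.card_eq_zero]
        ext r
        simp only [Finset.mem_filter, Finset.notMem_empty, iff_false]
        rintro ⟨hrR, hrei⟩
        exact hiT (hrei ▸ ((he c hc).1 r hrR).1)
    have hfinal : (∑ c ∈ N, (if i ∈ T c then 1 else 0)) = α i := by
      have h1 : ∀ c ∈ N, ((if i ∈ T c then 1 else 0 : ℕ) : ℤ) = y c i := by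
        intro c hc
        by_cases hiT : i ∈ T c
        · rw [if_pos hiT]
          have := (hyT c hc i hi).mp hiT
          omega
        · rw [if_neg hiT]
          have h2 : y c i ≠ 1 := fun h => hiT ((hyT c hc i hi).mpr h)
          rcases hy01 c hc i hi with h | h
          · omega
          · exact absurd h h2
      have h2 : ((∑ c ∈ N, (if i ∈ T c then 1 else 0 : ℕ)) : ℤ) = ∑ c ∈ N, y c i := by
        push_cast
        refine Finset.sum_congr rfl fun c hc => ?_
        have := h1 c hc
        push_cast at this ⊢
        exact this
      rw [hysum i hi] at h2
      exact_mod_cast h2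
    rw [← hfinal]
    exact Finset.sum_congr rfl fun c hc => hcol_cnt c hc


/-- `α ∈ S_D` iff there exists a perfect tableau of shape `D` and content `α`. -/
theorem schubitope_iff_perfect (n : ℕ) (D : Finset (ℕ × ℕ)) (hD : D ⊆ grid n)
    (α : ℕ → ℕ) :
    InSchubitope n D α ↔ ∃ τ : ℕ × ℕ → Option ℕ, IsPerfect n D τ α := by
  constructor
  · exact fun h => schubitope_to_perfect n D hD α h
  · rintro ⟨τ, hτ⟩
    exact perfect_to_schubitope n D hD α τ hτ

end Schub
end
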